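/- arXiv:2603.29799 — 9 statements merged into one kernel-verified Lean document; each statement's English description precedes it below -/
import Mathlib

section
/- Let r₁ > 3/2. There exists a constant C > 0 (depending only on r₁) such that for all t ≥ 0 and all x ∈ ℝ³, ∫_{ℝ³} (1 + |x−y|²/(1+t))^{−1} (1 + |y|²)^{−r₁} dy ≤ C (1 + |x|²/(1+t))^{−1}. -/
/-! Split the integral at the ball `B = B(x, |x|/2)`; this works in any dimension `d ≥ 3` with
`2 r > d`, and for any `s > 0` in place of `1 + t`. Off `B` we have `|x - y| ≥ |x|/2`, so the
weight `(1 + |x - y|²/s)⁻¹` is at most `4 (1 + |x|²/s)⁻¹`, and `(1 + |y|²)^(-r)` contributes its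
(finite) total mass. On `B` we have `|y| ≥ |x|/2`, so `(1 + |y|²)^(-r) ≤ 4^r (1 + |x|²)^(-r)`,
while polar coordinates give `∫_{|z|<R} (1 + |z|²/s)⁻¹ dz ≲ R^d (1 + R²/s)⁻¹` (this is where
`d ≥ 3` enters). With `R = |x|/2` the factor `|x|^d` is absorbed by `(1 + |x|²)^(-r)`. -/

open MeasureTheory Metric Set Module

lemma one_add_sq_div_le_four_mul {a b s : ℝ} (hs : 0 ≤ s) (ha : 0 ≤ a) (hab : a ≤ 2 * b) :
    1 + a ^ 2 / s ≤ 4 * (1 + b ^ 2 / s) := by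
  have hsq : a ^ 2 ≤ 4 * b ^ 2 := by nlinarith
  have : a ^ 2 / s ≤ 4 * (b ^ 2 / s) := by rw [← mul_div_assoc]; gcongr
  linarith

lemma one_add_sq_div_rpow_neg_le_four_rpow_mul {a b s r : ℝ} (hs : 0 ≤ s) (ha : 0 ≤ a)
    (hab : a ≤ 2 * b) (hr : 0 ≤ r) : (1 + b ^ 2 / s) ^ (-r) ≤ 4 ^ r * (1 + a ^ 2 / s) ^ (-r) := by
  have hpos : 0 < 1 + a ^ 2 / s := by positivity
  calc (1 + b ^ 2 / s) ^ (-r) ≤ ((1 + a ^ 2 / s) / 4) ^ (-r) :=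
        Real.rpow_le_rpow_of_nonpos (by positivity)
          (by linarith [one_add_sq_div_le_four_mul hs ha hab]) (neg_nonpos.2 hr)
    _ = 4 ^ r * (1 + a ^ 2 / s) ^ (-r) := by
        rw [Real.div_rpow hpos.le zero_le_four, Real.rpow_neg zero_le_four, div_inv_eq_mul,
          mul_comm]

lemma inv_one_add_sq_div_le_four_mul_inv {a b s : ℝ} (hs : 0 ≤ s) (ha : 0 ≤ a) (hab : a ≤ 2 * b) :
    (1 + b ^ 2 / s)⁻¹ ≤ 4 * (1 + a ^ 2 / s)⁻¹ := by
  simpa [Real.rpow_neg_one] using one_add_sq_div_rpow_neg_le_four_rpow_mul hs ha hab zero_le_one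

lemma norm_inv_one_add_sq_div_le_one (a : ℝ) {s : ℝ} (hs : 0 ≤ s) : ‖(1 + a ^ 2 / s)⁻¹‖ ≤ 1 := by
  have : 0 ≤ a ^ 2 / s := by positivity
  rw [Real.norm_of_nonneg (by positivity)]
  exact inv_le_one_of_one_le₀ (by linarith)

lemma one_add_sq_rpow_neg_mul_pow_le_one {a r : ℝ} {d : ℕ} (ha : 0 ≤ a) (hd : (d : ℝ) ≤ 2 * r) :
    (1 + a ^ 2) ^ (-r) * a ^ d ≤ 1 := by
  have hb : 0 < 1 + a ^ 2 := by positivity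
  have hpow : a ^ d ≤ (1 + a ^ 2) ^ r := calc
    a ^ d = (a ^ 2) ^ ((d : ℝ) / 2) := by
      rw [← Real.rpow_natCast a 2, ← Real.rpow_mul ha]; push_cast
      rw [mul_div_cancel₀ _ two_ne_zero, Real.rpow_natCast]
    _ ≤ (1 + a ^ 2) ^ ((d : ℝ) / 2) := by gcongr; linarith
    _ ≤ (1 + a ^ 2) ^ r :=
      Real.rpow_le_rpow_of_exponent_le (by linarith [sq_nonneg a]) (by linarith)
  rw [Real.rpow_neg hb.le, inv_mul_le_iff₀ (by positivity), mul_one]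
  exact hpow

lemma pow_mul_inv_one_add_sq_div_le {y R s : ℝ} {d : ℕ} (hd : 3 ≤ d) (hy : 0 ≤ y) (hyR : y ≤ R)
    (hs : 0 ≤ s) : y ^ (d - 1) * (1 + y ^ 2 / s)⁻¹ ≤ 2 * R ^ (d - 1) * (1 + R ^ 2 / s)⁻¹ := by
  obtain ⟨n, rfl⟩ : ∃ n, d = n + 3 := ⟨d - 3, by omega⟩
  rw [← div_eq_mul_inv, ← div_eq_mul_inv, div_le_div_iff₀ (by positivity) (by positivity),
    show n + 3 - 1 = n + 2 by omega]
  have hR : 0 ≤ R := hy.trans hyR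
  have hn : y ^ n ≤ R ^ n := pow_le_pow_left₀ hy hyR n
  have h2 : y ^ 2 ≤ R ^ 2 := pow_le_pow_left₀ hy hyR 2
  have hRn : 0 ≤ R ^ n * R ^ 2 := by positivity
  calc y ^ (n + 2) * (1 + R ^ 2 / s) = y ^ n * y ^ 2 + y ^ n * R ^ 2 * (y ^ 2 / s) := by
        rw [pow_add]; ring
    _ ≤ R ^ n * R ^ 2 + R ^ n * R ^ 2 * (y ^ 2 / s) := by gcongr
    _ ≤ 2 * R ^ (n + 2) * (1 + y ^ 2 / s) := by
        rw [pow_add]; nlinarith [show 0 ≤ y ^ 2 / s by positivity]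

lemma setIntegral_ball_comp_sub_right {G : Type*} [NormedAddCommGroup G] [MeasurableSpace G]
    [BorelSpace G] (μ : Measure G) [μ.IsAddRightInvariant] (h : G → ℝ) (x : G) (R : ℝ) :
    ∫ y in ball x R, h (y - x) ∂μ = ∫ z in ball 0 R, h z ∂μ := by
  have hpre : (fun y => y - x) ⁻¹' ball (0 : G) R = ball x R := by
    ext y; simp [dist_eq_norm]
  rw [← hpre]
  exact (measurePreserving_sub_right μ x).setIntegral_preimage_emb
    (measurableEmbedding_subRight x) h _

lemma setIntegral_compl_ball_half_norm_le {E : Type*} [NormedAddCommGroup E] [MeasurableSpace E]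
    [OpensMeasurableSpace E] (μ : Measure E) {g : E → ℝ} (hg : Integrable g μ) (hg0 : 0 ≤ g)
    {s : ℝ} (hs : 0 ≤ s) (x : E) :
    ∫ y in (ball x (‖x‖ / 2))ᶜ, (1 + ‖x - y‖ ^ 2 / s)⁻¹ * g y ∂μ
      ≤ 4 * (1 + ‖x‖ ^ 2 / s)⁻¹ * ∫ y, g y ∂μ := by
  calc ∫ y in (ball x (‖x‖ / 2))ᶜ, (1 + ‖x - y‖ ^ 2 / s)⁻¹ * g y ∂μ
      ≤ ∫ y in (ball x (‖x‖ / 2))ᶜ, 4 * (1 + ‖x‖ ^ 2 / s)⁻¹ * g y ∂μ := by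
        refine integral_mono_of_nonneg (ae_of_all _ fun y => mul_nonneg (by positivity) (hg0 y))
          (hg.integrableOn.const_mul _)
          (ae_restrict_of_forall_mem measurableSet_ball.compl fun y hy => ?_)
        have hxy : ‖x‖ ≤ 2 * ‖x - y‖ := by
          rw [mem_compl_iff, mem_ball, dist_eq_norm, norm_sub_rev, not_lt] at hy
          linarith
        exact mul_le_mul_of_nonneg_right
          (inv_one_add_sq_div_le_four_mul_inv hs (norm_nonneg x) hxy) (hg0 y)
    _ = 4 * (1 + ‖x‖ ^ 2 / s)⁻¹ * ∫ y in (ball x (‖x‖ / 2))ᶜ, g y ∂μ := integral_const_mul _ _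
    _ ≤ 4 * (1 + ‖x‖ ^ 2 / s)⁻¹ * ∫ y, g y ∂μ :=
        mul_le_mul_of_nonneg_left (setIntegral_le_integral hg (ae_of_all _ hg0))
          (by positivity)
section AddHaar

variable {E : Type*} [NormedAddCommGroup E] [NormedSpace ℝ E] [FiniteDimensional ℝ E]
  [MeasurableSpace E] [BorelSpace E] (μ : Measure E) [μ.IsAddHaarMeasure]

lemma setIntegral_ball_zero_fun_norm [Nontrivial E] (f : ℝ → ℝ) (R : ℝ) :
    ∫ z in ball (0 : E) R, f ‖z‖ ∂μ
      = finrank ℝ E * μ.real (ball 0 1) * ∫ y in Ioo 0 R, y ^ (finrank ℝ E - 1) * f y := by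
  have hball : ball (0 : E) R = norm ⁻¹' Iio R := by ext z; simp
  rw [← integral_indicator measurableSet_ball, hball]
  simp_rw [← Function.comp_apply (f := f) (g := norm), indicator_comp_right]
  rw [integral_fun_norm_addHaar μ, ← Ioi_inter_Iio, ← setIntegral_indicator measurableSet_Iio]
  simp [indicator_mul_right, mul_assoc]

lemma setIntegral_ball_zero_inv_one_add_sq_div_le (hd : 3 ≤ finrank ℝ E) {s : ℝ} (hs : 0 < s)
    {R : ℝ} (hR : 0 ≤ R) :
    ∫ z in ball (0 : E) R, (1 + ‖z‖ ^ 2 / s)⁻¹ ∂μ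
      ≤ 2 * finrank ℝ E * μ.real (ball 0 1) * R ^ finrank ℝ E * (1 + R ^ 2 / s)⁻¹ := by
  have : Nontrivial E := Module.nontrivial_of_finrank_pos (R := ℝ) (by omega)
  set c := 2 * R ^ (finrank ℝ E - 1) * (1 + R ^ 2 / s)⁻¹
  have hradial : ∫ y in Ioo 0 R, y ^ (finrank ℝ E - 1) * (1 + y ^ 2 / s)⁻¹ ≤ ∫ _ in Ioo 0 R, c :=
    integral_mono_of_nonneg
      (ae_restrict_of_forall_mem measurableSet_Ioo fun y hy => by have := hy.1.le; positivity)
      (integrableOn_const measure_Ioo_lt_top.ne)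
      (ae_restrict_of_forall_mem measurableSet_Ioo fun y hy =>
        pow_mul_inv_one_add_sq_div_le hd hy.1.le hy.2.le hs.le)
  rw [setIntegral_ball_zero_fun_norm μ (fun y => (1 + y ^ 2 / s)⁻¹)]
  calc _ ≤ finrank ℝ E * μ.real (ball 0 1) * ∫ _ in Ioo 0 R, c := by gcongr
    _ = 2 * finrank ℝ E * μ.real (ball 0 1) * R ^ finrank ℝ E * (1 + R ^ 2 / s)⁻¹ := by
      rw [setIntegral_const, Real.volume_real_Ioo_of_le hR, smul_eq_mul, sub_zero,
        ← pow_sub_one_mul (by omega : finrank ℝ E ≠ 0) R]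
      ring

lemma setIntegral_ball_half_norm_le (hd : 3 ≤ finrank ℝ E) {r : ℝ}
    (hr : (finrank ℝ E : ℝ) ≤ 2 * r) {s : ℝ} (hs : 0 < s) (x : E) :
    ∫ y in ball x (‖x‖ / 2), (1 + ‖x - y‖ ^ 2 / s)⁻¹ * (1 + ‖y‖ ^ 2) ^ (-r) ∂μ
      ≤ 8 * 4 ^ r * finrank ℝ E * μ.real (ball 0 1) * (1 + ‖x‖ ^ 2 / s)⁻¹ := by
  set R := ‖x‖ / 2 with hR
  set a := 4 ^ r * (1 + ‖x‖ ^ 2) ^ (-r)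
  have hdecay : ∀ y ∈ ball x R, (1 + ‖y‖ ^ 2) ^ (-r) ≤ a := fun y hy => by
    have hxy : ‖x‖ ≤ 2 * ‖y‖ := by
      rw [mem_ball, dist_eq_norm] at hy
      linarith [norm_sub_norm_le x y, norm_sub_rev y x, hR]
    simpa using
      one_add_sq_div_rpow_neg_le_four_rpow_mul zero_le_one (norm_nonneg x) hxy (by linarith)
  have hweight : IntegrableOn (fun y => a * (1 + ‖y - x‖ ^ 2 / s)⁻¹) (ball x R) μ :=
    (Measure.integrableOn_of_bounded measure_ball_lt_top.ne (by fun_prop)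
      (ae_of_all _ fun y => norm_inv_one_add_sq_div_le_one _ hs.le)).const_mul a
  calc ∫ y in ball x R, (1 + ‖x - y‖ ^ 2 / s)⁻¹ * (1 + ‖y‖ ^ 2) ^ (-r) ∂μ
      ≤ ∫ y in ball x R, a * (1 + ‖y - x‖ ^ 2 / s)⁻¹ ∂μ := by
        refine integral_mono_of_nonneg (ae_of_all _ fun y => by positivity) hweight
          (ae_restrict_of_forall_mem measurableSet_ball fun y hy => ?_)
        dsimp only
        rw [norm_sub_rev, mul_comm]
        exact mul_le_mul_of_nonneg_right (hdecay y hy) (by positivity)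
    _ = a * ∫ z in ball 0 R, (1 + ‖z‖ ^ 2 / s)⁻¹ ∂μ := by
        rw [integral_const_mul, setIntegral_ball_comp_sub_right μ (fun z => (1 + ‖z‖ ^ 2 / s)⁻¹)]
    _ ≤ a * (2 * finrank ℝ E * μ.real (ball 0 1) * ‖x‖ ^ finrank ℝ E
          * (4 * (1 + ‖x‖ ^ 2 / s)⁻¹)) := by
        grw [setIntegral_ball_zero_inv_one_add_sq_div_le μ hd hs (by positivity : 0 ≤ R)]
        gcongr
        · linarith [norm_nonneg x]
        · exact inv_one_add_sq_div_le_four_mul_inv hs.le (norm_nonneg x) (by linarith)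
    _ = 8 * 4 ^ r * finrank ℝ E * μ.real (ball 0 1) * (1 + ‖x‖ ^ 2 / s)⁻¹
          * ((1 + ‖x‖ ^ 2) ^ (-r) * ‖x‖ ^ finrank ℝ E) := by ring
    _ ≤ 8 * 4 ^ r * finrank ℝ E * μ.real (ball 0 1) * (1 + ‖x‖ ^ 2 / s)⁻¹ := by
        grw [one_add_sq_rpow_neg_mul_pow_le_one (norm_nonneg x) hr, mul_one]

theorem integral_inv_one_add_sq_div_mul_rpow_neg_le (hd : 3 ≤ finrank ℝ E) {r : ℝ}
    (hr : (finrank ℝ E : ℝ) < 2 * r) {s : ℝ} (hs : 0 < s) (x : E) :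
    ∫ y, (1 + ‖x - y‖ ^ 2 / s)⁻¹ * (1 + ‖y‖ ^ 2) ^ (-r) ∂μ
      ≤ (4 * ∫ y, (1 + ‖y‖ ^ 2) ^ (-r) ∂μ + 8 * 4 ^ r * finrank ℝ E * μ.real (ball 0 1))
          * (1 + ‖x‖ ^ 2 / s)⁻¹ := by
  have hg : Integrable (fun y : E => (1 + ‖y‖ ^ 2) ^ (-r)) μ := by
    simpa [neg_div] using integrable_rpow_neg_one_add_norm_sq (μ := μ) hr
  have hf : Integrable (fun y => (1 + ‖x - y‖ ^ 2 / s)⁻¹ * (1 + ‖y‖ ^ 2) ^ (-r)) μ :=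
    hg.bdd_mul (by fun_prop) (ae_of_all _ fun y => norm_inv_one_add_sq_div_le_one _ hs.le)
  rw [← integral_add_compl measurableSet_ball hf]
  grw [setIntegral_ball_half_norm_le μ hd hr.le hs x,
    setIntegral_compl_ball_half_norm_le μ hg (fun y => by positivity) hs.le x]
  linarith

end AddHaar

/-- Estimate ℐ₁ of Lemma A.3: convolution of the Riesz wave profile with a
spatially decaying initial datum. -/
theorem stmt_0 (r₁ : ℝ) (hr₁ : r₁ > 3 / 2) :
    ∃ C : ℝ, 0 < C ∧ ∀ t : ℝ, 0 ≤ t → ∀ x : EuclideanSpace ℝ (Fin 3),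
      (∫ y : EuclideanSpace ℝ (Fin 3),
          (1 + ‖x - y‖ ^ 2 / (1 + t)) ^ (-1 : ℝ) * (1 + ‖y‖ ^ 2) ^ (-r₁))
        ≤ C * (1 + ‖x‖ ^ 2 / (1 + t)) ^ (-1 : ℝ) := by
  have hd : finrank ℝ (EuclideanSpace ℝ (Fin 3)) = 3 := finrank_euclideanSpace_fin
  set K := ∫ y : EuclideanSpace ℝ (Fin 3), (1 + ‖y‖ ^ 2) ^ (-r₁)
  set κ := volume.real (ball (0 : EuclideanSpace ℝ (Fin 3)) 1)
  have hK : 0 ≤ K := integral_nonneg fun y => by positivity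
  have hκ : 0 < κ := ENNReal.toReal_pos (measure_ball_pos _ _ one_pos).ne' measure_ball_lt_top.ne
  refine ⟨4 * K + 8 * 4 ^ r₁ * 3 * κ,
    add_pos_of_nonneg_of_pos (by positivity) (mul_pos (by positivity) hκ), fun t ht x => ?_⟩
  have h := integral_inv_one_add_sq_div_mul_rpow_neg_le volume hd.ge (r := r₁)
    (by rw [hd]; push_cast; linarith) (s := 1 + t) (by linarith) x
  rw [hd, Nat.cast_ofNat] at h
  simpa only [Real.rpow_neg_one] using h
end

section
/- Let r₁ > 3/2. There exists a constant C > 0 (depending only on r₁) such that for all t ≥ 0 and all x ∈ ℝ³, ∫_{ℝ³} (1 + |x−y|²/(1+t))^{−3/2} (1 + |y|²)^{−r₁} dy ≤ C (1 + |x|²/(1+t))^{−3/2}. -/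
open MeasureTheory

section StmtAux

open Real

/-- `(q / c) ^ (-p) = c ^ p * q ^ (-p)` for positive `q`, `c`. -/
private lemma aux_div_rpow_neg {q c p : ℝ} (hq : 0 < q) (hc : 0 < c) :
    (q / c) ^ (-p) = c ^ p * q ^ (-p) := by
  rw [Real.rpow_neg (by positivity), Real.div_rpow hq.le hc.le, Real.rpow_neg hq.le, inv_div,
    div_eq_mul_inv]

private lemma aux_four_rpow : (4 : ℝ) ^ ((3 : ℝ) / 2) = 8 := by
  have h0 : (0 : ℝ) ≤ 4 ^ ((3 : ℝ) / 2) := Real.rpow_nonneg (by norm_num) _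
  have h : ((4 : ℝ) ^ ((3 : ℝ) / 2)) ^ (2 : ℕ) = 64 := by
    rw [← Real.rpow_natCast ((4 : ℝ) ^ ((3 : ℝ) / 2)) 2,
      ← Real.rpow_mul (by norm_num : (0 : ℝ) ≤ 4),
      show ((3 : ℝ) / 2 * ((2 : ℕ) : ℝ)) = ((3 : ℕ) : ℝ) by push_cast; ring,
      Real.rpow_natCast]
    norm_num
  have h2 : ((4 : ℝ) ^ ((3 : ℝ) / 2) - 8) * ((4 : ℝ) ^ ((3 : ℝ) / 2) + 8) = 0 := by nlinarith
  rcases mul_eq_zero.1 h2 with h3 | h3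
  · linarith
  · nlinarith

private lemma aux_two_rpow_le {p : ℝ} (hp : p ≤ 3) : (2 : ℝ) ^ p ≤ 8 := by
  calc (2 : ℝ) ^ p ≤ (2 : ℝ) ^ ((3 : ℕ) : ℝ) :=
        Real.rpow_le_rpow_of_exponent_le one_le_two (by push_cast; linarith)
    _ = 8 := by rw [Real.rpow_natCast]; norm_num

/-- integrability of `(1 + ‖y‖²)^(-c)` on `ℝ³` for `c > 3/2`. -/
private lemma aux_integrable {c : ℝ} (hc : 3 < 2 * c) :
    Integrable (fun y : EuclideanSpace ℝ (Fin 3) => (1 + ‖y‖ ^ 2) ^ (-c)) := by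
  have h := integrable_rpow_neg_one_add_norm_sq (E := EuclideanSpace ℝ (Fin 3))
      (μ := volume) (r := 2 * c)
      (by rw [finrank_euclideanSpace_fin]; exact_mod_cast hc)
  simpa [show -(2 * c) / 2 = -c by ring] using h

end StmtAux

set_option maxHeartbeats 2000000 in
/-- Estimate ℐ₂ of Lemma A.3: convolution of the diffusion wave profile with a
spatially decaying initial datum. -/
theorem stmt_1 (r₁ : ℝ) (hr₁ : r₁ > 3 / 2) :
    ∃ C : ℝ, 0 < C ∧ ∀ t : ℝ, 0 ≤ t → ∀ x : EuclideanSpace ℝ (Fin 3),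
      (∫ y : EuclideanSpace ℝ (Fin 3),
          (1 + ‖x - y‖ ^ 2 / (1 + t)) ^ (-(3 / 2) : ℝ) * (1 + ‖y‖ ^ 2) ^ (-r₁))
        ≤ C * (1 + ‖x‖ ^ 2 / (1 + t)) ^ (-(3 / 2) : ℝ) := by
  set ε : ℝ := min (r₁ - 3 / 2) 1 with hεdef
  have hε0 : 0 < ε := lt_min (by linarith) one_pos
  have hε1 : ε ≤ 1 := min_le_right _ _
  have hεr : ε + 3 / 2 ≤ r₁ := by
    have : ε ≤ r₁ - 3 / 2 := min_le_left _ _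
    linarith
  have hr₁0 : 0 < r₁ := by linarith
  have hG : Integrable (fun y : EuclideanSpace ℝ (Fin 3) => (1 + ‖y‖ ^ 2) ^ (-r₁)) :=
    aux_integrable (by linarith)
  have hG' : Integrable (fun y : EuclideanSpace ℝ (Fin 3) => (1 + ‖y‖ ^ 2) ^ (-(3 / 2 + ε))) :=
    aux_integrable (by linarith)
  set c₀ : ℝ := ∫ y : EuclideanSpace ℝ (Fin 3), (1 + ‖y‖ ^ 2) ^ (-r₁) with hc₀def
  set c₁ : ℝ := ∫ y : EuclideanSpace ℝ (Fin 3), (1 + ‖y‖ ^ 2) ^ (-(3 / 2 + ε)) with hc₁def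
  have hc₀ : 0 ≤ c₀ := by
    rw [hc₀def]
    exact integral_nonneg fun y => by positivity
  have hc₁ : 0 ≤ c₁ := by
    rw [hc₁def]
    exact integral_nonneg fun y => by positivity
  have h4r : (0 : ℝ) < 4 ^ r₁ := Real.rpow_pos_of_pos (by norm_num) _
  have h4c : (0 : ℝ) ≤ 4 ^ r₁ * 8 * c₁ :=
    mul_nonneg (mul_nonneg h4r.le (by norm_num)) hc₁
  refine ⟨8 * c₀ + 4 ^ r₁ * 8 * c₁ + 1, by linarith, ?_⟩
  intro t ht x
  have hs0 : (0 : ℝ) < 1 + t := by linarith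
  have hs1 : (1 : ℝ) ≤ 1 + t := by linarith
  set s : ℝ := 1 + t with hsdef
  set a : ℝ := ‖x‖ with hadef
  have ha : 0 ≤ a := norm_nonneg x
  have hq0 : (0 : ℝ) < 1 + a ^ 2 / s := by
    have := div_nonneg (sq_nonneg a) hs0.le
    linarith
  set R : ℝ := (1 + a ^ 2 / s) ^ (-(3 / 2) : ℝ) with hRdef
  have hR0 : 0 < R := Real.rpow_pos_of_pos hq0 _
  set f : EuclideanSpace ℝ (Fin 3) → ℝ :=
    fun y => (1 + ‖x - y‖ ^ 2 / s) ^ (-(3 / 2) : ℝ) * (1 + ‖y‖ ^ 2) ^ (-r₁) with hfdef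
  have hbpos : ∀ y : EuclideanSpace ℝ (Fin 3), (0 : ℝ) < 1 + ‖x - y‖ ^ 2 / s := fun y => by
    have := div_nonneg (sq_nonneg ‖x - y‖) hs0.le
    linarith
  have hf_nonneg : ∀ y, 0 ≤ f y := fun y =>
    mul_nonneg (Real.rpow_nonneg (hbpos y).le _) (Real.rpow_nonneg (by positivity) _)
  have hf_le : ∀ y, f y ≤ (1 + ‖y‖ ^ 2) ^ (-r₁) := by
    intro y
    have h1 : (1 + ‖x - y‖ ^ 2 / s) ^ (-(3 / 2) : ℝ) ≤ 1 := by
      apply Real.rpow_le_one_of_one_le_of_nonpos ?_ (by norm_num)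
      have := div_nonneg (sq_nonneg ‖x - y‖) hs0.le
      linarith
    have h2 : (0 : ℝ) ≤ (1 + ‖y‖ ^ 2) ^ (-r₁) := Real.rpow_nonneg (by positivity) _
    have h3 : f y ≤ 1 * (1 + ‖y‖ ^ 2) ^ (-r₁) := mul_le_mul_of_nonneg_right h1 h2
    linarith [h3]
  have hf : Integrable f := by
    refine hG.mono' (Measurable.aestronglyMeasurable (by fun_prop)) ?_
    exact Filter.Eventually.of_forall fun y => by
      rw [Real.norm_eq_abs, abs_of_nonneg (hf_nonneg y)]; exact hf_le y
  have hintf : (∫ y, f y) ≤ c₀ := by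
    rw [hc₀def]
    exact integral_mono hf hG hf_le
  rcases le_or_gt (a ^ 2) s with hcase | hcase
  · -- Case 1: `‖x‖² ≤ 1 + t`; the weight on the right is bounded below.
    have hRlow : (1 : ℝ) / 8 ≤ R := by
      have h2 : (1 + a ^ 2 / s) ≤ 2 := by
        have h2' : a ^ 2 / s ≤ 1 := by
          rw [div_le_one hs0]; exact hcase
        linarith
      have h3 : (1 + a ^ 2 / s) ^ ((3 : ℝ) / 2) ≤ 8 := by
        calc (1 + a ^ 2 / s) ^ ((3 : ℝ) / 2) ≤ (2 : ℝ) ^ ((3 : ℝ) / 2) :=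
              Real.rpow_le_rpow hq0.le h2 (by norm_num)
          _ ≤ 8 := aux_two_rpow_le (by norm_num)
      have hp : (0 : ℝ) < (1 + a ^ 2 / s) ^ ((3 : ℝ) / 2) := Real.rpow_pos_of_pos hq0 _
      have h6 := one_div_le_one_div_of_le hp h3
      rw [hRdef, Real.rpow_neg hq0.le, ← one_div]
      exact h6
    have hfin : c₀ ≤ (8 * c₀ + 4 ^ r₁ * 8 * c₁ + 1) * R := by
      nlinarith [hR0, hRlow, hc₀, h4c]
    linarith
  · -- Case 2: `1 + t < ‖x‖²`.
    have h1a : (1 : ℝ) < a ^ 2 := by linarith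
    have ha1 : 1 ≤ a := by nlinarith
    set A : Set (EuclideanSpace ℝ (Fin 3)) := Metric.closedBall x (a / 2) with hAdef
    have hA : MeasurableSet A := measurableSet_closedBall
    -- Outer region: `‖x - y‖ ≥ ‖x‖/2`, so the first factor is small.
    have hBc : (∫ y in Aᶜ, f y) ≤ 8 * c₀ * R := by
      have hb : ∀ y ∈ Aᶜ, f y ≤ (8 * R) * (1 + ‖y‖ ^ 2) ^ (-r₁) := by
        intro y hy
        have hy' : ¬ y ∈ Metric.closedBall x (a / 2) := hy
        simp only [Metric.mem_closedBall, not_le] at hy'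
        have hxy : a / 2 ≤ ‖x - y‖ := by
          rw [show ‖x - y‖ = dist y x from by rw [dist_comm, dist_eq_norm]]
          exact hy'.le
        have hsq : a ^ 2 / 4 ≤ ‖x - y‖ ^ 2 := by
          have hprod : 0 ≤ (‖x - y‖ - a / 2) * (‖x - y‖ + a / 2) :=
            mul_nonneg (by linarith) (by linarith [norm_nonneg (x - y)])
          nlinarith
        have hbase : (1 + a ^ 2 / s) / 4 ≤ 1 + ‖x - y‖ ^ 2 / s := by
          have h1 : a ^ 2 / s ≤ 4 * (‖x - y‖ ^ 2 / s) := by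
            rw [div_le_iff₀ hs0]
            have he : 4 * (‖x - y‖ ^ 2 / s) * s = 4 * ‖x - y‖ ^ 2 := by field_simp
            rw [he]; linarith
          linarith
        have hfb : (1 + ‖x - y‖ ^ 2 / s) ^ (-(3 / 2) : ℝ) ≤ 8 * R := by
          have h1 : (1 + ‖x - y‖ ^ 2 / s) ^ (-(3 / 2) : ℝ)
              ≤ ((1 + a ^ 2 / s) / 4) ^ (-(3 / 2) : ℝ) :=
            Real.rpow_le_rpow_of_nonpos (div_pos hq0 (by norm_num)) hbase (by norm_num)
          have h2 : ((1 + a ^ 2 / s) / 4) ^ (-(3 / 2) : ℝ) = 8 * R := by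
            rw [hRdef, aux_div_rpow_neg hq0 (by norm_num : (0 : ℝ) < 4), aux_four_rpow]
          linarith
        have h2 : (0 : ℝ) ≤ (1 + ‖y‖ ^ 2) ^ (-r₁) := Real.rpow_nonneg (by positivity) _
        exact mul_le_mul_of_nonneg_right hfb h2
      have step1 : (∫ y in Aᶜ, f y) ≤ ∫ y in Aᶜ, (8 * R) * (1 + ‖y‖ ^ 2) ^ (-r₁) :=
        setIntegral_mono_on hf.integrableOn ((hG.const_mul _).integrableOn) hA.compl hb
      have step2 : (∫ y in Aᶜ, (8 * R) * (1 + ‖y‖ ^ 2) ^ (-r₁))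
          ≤ ∫ y : EuclideanSpace ℝ (Fin 3), (8 * R) * (1 + ‖y‖ ^ 2) ^ (-r₁) :=
        setIntegral_le_integral (hG.const_mul _)
          (Filter.Eventually.of_forall fun y =>
            mul_nonneg (mul_nonneg (by norm_num) hR0.le)
              (Real.rpow_nonneg (by positivity) _))
      have step3 : (∫ y : EuclideanSpace ℝ (Fin 3), (8 * R) * (1 + ‖y‖ ^ 2) ^ (-r₁))
          = (8 * R) * c₀ := by
        rw [hc₀def]
        exact integral_const_mul _ _
      have : (8 : ℝ) * R * c₀ = 8 * c₀ * R := by ring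
      linarith
    -- Inner region: `‖x - y‖ ≤ ‖x‖/2`, so `‖y‖ ≥ ‖x‖/2` and the datum is small.
    set D : ℝ := 4 ^ r₁ * (1 + a ^ 2) ^ (-r₁) * ((2 * a ^ 2 / s) ^ ε * s ^ ((3 : ℝ) / 2 + ε))
      with hDdef
    have hw0 : (0 : ℝ) < 2 * a ^ 2 / s := div_pos (by nlinarith) hs0
    have hbA : ∀ y ∈ A, f y ≤ D * (1 + ‖x - y‖ ^ 2) ^ (-(3 / 2 + ε)) := by
      intro y hy
      have hxy : ‖x - y‖ ≤ a / 2 := by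
        rw [show ‖x - y‖ = dist y x from by rw [dist_comm, dist_eq_norm]]
        exact Metric.mem_closedBall.1 hy
      have hny : a / 2 ≤ ‖y‖ := by
        have h1 : a - ‖y‖ ≤ ‖x - y‖ := by
          have h2 := norm_sub_norm_le x y
          linarith [h2]
        linarith
      -- bound on the datum factor
      have hGy : (1 + ‖y‖ ^ 2) ^ (-r₁) ≤ 4 ^ r₁ * (1 + a ^ 2) ^ (-r₁) := by
        have hsq : a ^ 2 / 4 ≤ ‖y‖ ^ 2 := by
          have hprod : 0 ≤ (‖y‖ - a / 2) * (‖y‖ + a / 2) :=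
            mul_nonneg (by linarith) (by linarith [norm_nonneg y])
          nlinarith
        have h1 : (1 + a ^ 2) / 4 ≤ 1 + ‖y‖ ^ 2 := by linarith
        have h2 : (1 + ‖y‖ ^ 2) ^ (-r₁) ≤ ((1 + a ^ 2) / 4) ^ (-r₁) :=
          Real.rpow_le_rpow_of_nonpos (by positivity) h1 (by linarith)
        rwa [aux_div_rpow_neg (by positivity) (by norm_num : (0 : ℝ) < 4)] at h2
      -- split and bound the diffusion factor
      have hsplit2 : (1 + ‖x - y‖ ^ 2 / s) ^ (-(3 / 2) : ℝ)
          = (1 + ‖x - y‖ ^ 2 / s) ^ (-(3 / 2 + ε)) * (1 + ‖x - y‖ ^ 2 / s) ^ ε := by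
        rw [show (-(3 / 2) : ℝ) = -(3 / 2 + ε) + ε by ring, Real.rpow_add (hbpos y)]
      have hF1 : (1 + ‖x - y‖ ^ 2 / s) ^ (-(3 / 2 + ε))
          ≤ s ^ ((3 : ℝ) / 2 + ε) * (1 + ‖x - y‖ ^ 2) ^ (-(3 / 2 + ε)) := by
        have h1 : (1 + ‖x - y‖ ^ 2) / s ≤ 1 + ‖x - y‖ ^ 2 / s := by
          have h1s : (1 : ℝ) / s ≤ 1 := by rw [div_le_one hs0]; exact hs1
          have he : (1 + ‖x - y‖ ^ 2) / s = 1 / s + ‖x - y‖ ^ 2 / s := by ring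
          linarith
        have h2 : (1 + ‖x - y‖ ^ 2 / s) ^ (-(3 / 2 + ε))
            ≤ ((1 + ‖x - y‖ ^ 2) / s) ^ (-(3 / 2 + ε)) :=
          Real.rpow_le_rpow_of_nonpos (div_pos (by positivity) hs0) h1 (by linarith)
        rwa [aux_div_rpow_neg (by positivity) hs0,
          show ((3 : ℝ) / 2 + ε) = (3 / 2 + ε : ℝ) by norm_num] at h2
      have hF2 : (1 + ‖x - y‖ ^ 2 / s) ^ ε ≤ (2 * a ^ 2 / s) ^ ε := by
        apply Real.rpow_le_rpow (hbpos y).le ?_ hε0.le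
        have h1 : ‖x - y‖ ^ 2 ≤ a ^ 2 := by
          have hprod : 0 ≤ (a / 2 - ‖x - y‖) * (a / 2 + ‖x - y‖) :=
            mul_nonneg (by linarith) (by linarith [norm_nonneg (x - y)])
          nlinarith
        have h2 : (1 : ℝ) ≤ a ^ 2 / s := by rw [le_div_iff₀ hs0]; linarith
        have h3 : ‖x - y‖ ^ 2 / s ≤ a ^ 2 / s := by
          rw [div_le_div_iff₀ hs0 hs0]; nlinarith [hs0.le]
        have he : 2 * a ^ 2 / s = a ^ 2 / s + a ^ 2 / s := by ring
        linarith
      have hs_nn : (0 : ℝ) ≤ s ^ ((3 : ℝ) / 2 + ε) := Real.rpow_nonneg hs0.le _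
      have hG'_nn : (0 : ℝ) ≤ (1 + ‖x - y‖ ^ 2) ^ (-(3 / 2 + ε)) :=
        Real.rpow_nonneg (by positivity) _
      have hw_nn : (0 : ℝ) ≤ (2 * a ^ 2 / s) ^ ε := Real.rpow_nonneg hw0.le _
      have hF1F2 : (1 + ‖x - y‖ ^ 2 / s) ^ (-(3 / 2 + ε)) * (1 + ‖x - y‖ ^ 2 / s) ^ ε
          ≤ (s ^ ((3 : ℝ) / 2 + ε) * (1 + ‖x - y‖ ^ 2) ^ (-(3 / 2 + ε)))
            * (2 * a ^ 2 / s) ^ ε :=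
        mul_le_mul hF1 hF2 (Real.rpow_nonneg (hbpos y).le _) (mul_nonneg hs_nn hG'_nn)
      have hGy_nn : (0 : ℝ) ≤ (1 + ‖y‖ ^ 2) ^ (-r₁) := Real.rpow_nonneg (by positivity) _
      have hstep : ((1 + ‖x - y‖ ^ 2 / s) ^ (-(3 / 2 + ε)) * (1 + ‖x - y‖ ^ 2 / s) ^ ε)
          * (1 + ‖y‖ ^ 2) ^ (-r₁)
          ≤ ((s ^ ((3 : ℝ) / 2 + ε) * (1 + ‖x - y‖ ^ 2) ^ (-(3 / 2 + ε)))
              * (2 * a ^ 2 / s) ^ ε) * (4 ^ r₁ * (1 + a ^ 2) ^ (-r₁)) := by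
        apply mul_le_mul hF1F2 hGy hGy_nn
        exact mul_nonneg (mul_nonneg hs_nn hG'_nn) hw_nn
      have heq : f y = ((1 + ‖x - y‖ ^ 2 / s) ^ (-(3 / 2 + ε)) * (1 + ‖x - y‖ ^ 2 / s) ^ ε)
          * (1 + ‖y‖ ^ 2) ^ (-r₁) := by
        show (1 + ‖x - y‖ ^ 2 / s) ^ (-(3 / 2) : ℝ) * (1 + ‖y‖ ^ 2) ^ (-r₁) = _
        rw [hsplit2]
      have heq2 : ((s ^ ((3 : ℝ) / 2 + ε) * (1 + ‖x - y‖ ^ 2) ^ (-(3 / 2 + ε)))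
          * (2 * a ^ 2 / s) ^ ε) * (4 ^ r₁ * (1 + a ^ 2) ^ (-r₁))
          = D * (1 + ‖x - y‖ ^ 2) ^ (-(3 / 2 + ε)) := by
        rw [hDdef]; ring
      rw [heq, ← heq2]
      exact hstep
    have hD0 : 0 ≤ D := by
      rw [hDdef]
      have h1 : (0 : ℝ) ≤ (1 + a ^ 2) ^ (-r₁) := Real.rpow_nonneg (by positivity) _
      have h2 : (0 : ℝ) ≤ (2 * a ^ 2 / s) ^ ε := Real.rpow_nonneg hw0.le _
      have h3 : (0 : ℝ) ≤ s ^ ((3 : ℝ) / 2 + ε) := Real.rpow_nonneg hs0.le _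
      exact mul_nonneg (mul_nonneg h4r.le h1) (mul_nonneg h2 h3)
    have hintD : Integrable (fun y : EuclideanSpace ℝ (Fin 3) =>
        D * (1 + ‖x - y‖ ^ 2) ^ (-(3 / 2 + ε))) :=
      (hG'.comp_sub_left x).const_mul D
    have hAc : (∫ y in A, f y) ≤ D * c₁ := by
      have step1 : (∫ y in A, f y) ≤ ∫ y in A, D * (1 + ‖x - y‖ ^ 2) ^ (-(3 / 2 + ε)) :=
        setIntegral_mono_on hf.integrableOn hintD.integrableOn hA hbA
      have step2 : (∫ y in A, D * (1 + ‖x - y‖ ^ 2) ^ (-(3 / 2 + ε)))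
          ≤ ∫ y : EuclideanSpace ℝ (Fin 3), D * (1 + ‖x - y‖ ^ 2) ^ (-(3 / 2 + ε)) :=
        setIntegral_le_integral hintD (Filter.Eventually.of_forall fun y =>
          mul_nonneg hD0 (Real.rpow_nonneg (by positivity) _))
      have step3 : (∫ y : EuclideanSpace ℝ (Fin 3), D * (1 + ‖x - y‖ ^ 2) ^ (-(3 / 2 + ε)))
          = D * ∫ y : EuclideanSpace ℝ (Fin 3), (1 + ‖x - y‖ ^ 2) ^ (-(3 / 2 + ε)) :=
        integral_const_mul _ _
      have step4 : (∫ y : EuclideanSpace ℝ (Fin 3), (1 + ‖x - y‖ ^ 2) ^ (-(3 / 2 + ε))) = c₁ := by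
        rw [hc₁def]
        exact integral_sub_left_eq_self
          (fun y : EuclideanSpace ℝ (Fin 3) => (1 + ‖y‖ ^ 2) ^ (-(3 / 2 + ε))) volume x
      rw [step3, step4] at step2
      linarith
    -- The key arithmetic inequality.
    have hkey : (1 + a ^ 2) ^ (-r₁) * ((2 * a ^ 2 / s) ^ ε * s ^ ((3 : ℝ) / 2 + ε)) ≤ 8 * R := by
      have h2s : (1 : ℝ) ≤ a ^ 2 / s := by rw [le_div_iff₀ hs0]; linarith
      have hwle : 1 + a ^ 2 / s ≤ 2 * a ^ 2 / s := by
        have he : 2 * a ^ 2 / s = a ^ 2 / s + a ^ 2 / s := by ring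
        linarith
      have hR_ge : (2 * a ^ 2 / s) ^ (-(3 / 2) : ℝ) ≤ R := by
        rw [hRdef]
        exact Real.rpow_le_rpow_of_nonpos hq0 hwle (by norm_num)
      have hmain : (1 + a ^ 2) ^ (-r₁) * ((2 * a ^ 2 / s) ^ ε * s ^ ((3 : ℝ) / 2 + ε))
          ≤ 8 * (2 * a ^ 2 / s) ^ (-(3 / 2) : ℝ) := by
        have hwp : (0 : ℝ) < (2 * a ^ 2 / s) ^ ((3 : ℝ) / 2) := Real.rpow_pos_of_pos hw0 _
        rw [Real.rpow_neg hw0.le, mul_comm (8 : ℝ), ← div_eq_inv_mul, le_div_iff₀ hwp]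
        have he1 : (1 + a ^ 2) ^ (-r₁) * ((2 * a ^ 2 / s) ^ ε * s ^ ((3 : ℝ) / 2 + ε))
            * (2 * a ^ 2 / s) ^ ((3 : ℝ) / 2)
            = (1 + a ^ 2) ^ (-r₁) * ((2 * a ^ 2 / s) ^ (ε + (3 : ℝ) / 2)
              * s ^ ((3 : ℝ) / 2 + ε)) := by
          rw [Real.rpow_add hw0]; ring
        rw [he1]
        have he2 : (2 * a ^ 2 / s) ^ (ε + (3 : ℝ) / 2)
            = (2 * a ^ 2) ^ (ε + (3 : ℝ) / 2) / s ^ (ε + (3 : ℝ) / 2) :=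
          Real.div_rpow (by positivity) hs0.le _
        have he3 : s ^ ((3 : ℝ) / 2 + ε) = s ^ (ε + (3 : ℝ) / 2) := by ring_nf
        have he4 : (2 * a ^ 2 / s) ^ (ε + (3 : ℝ) / 2) * s ^ ((3 : ℝ) / 2 + ε)
            = (2 * a ^ 2) ^ (ε + (3 : ℝ) / 2) := by
          rw [he2, he3, div_mul_cancel₀]
          exact (Real.rpow_pos_of_pos hs0 _).ne'
        rw [he4]
        have he5 : (2 * a ^ 2) ^ (ε + (3 : ℝ) / 2)
            = 2 ^ (ε + (3 : ℝ) / 2) * (a ^ 2) ^ (ε + (3 : ℝ) / 2) :=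
          Real.mul_rpow (by norm_num) (by positivity)
        have h6 : (2 : ℝ) ^ (ε + (3 : ℝ) / 2) ≤ 8 := aux_two_rpow_le (by linarith)
        have h7 : (a ^ 2) ^ (ε + (3 : ℝ) / 2) ≤ (1 + a ^ 2) ^ r₁ := by
          calc (a ^ 2) ^ (ε + (3 : ℝ) / 2) ≤ (a ^ 2) ^ r₁ :=
                Real.rpow_le_rpow_of_exponent_le h1a.le (by linarith)
            _ ≤ (1 + a ^ 2) ^ r₁ := Real.rpow_le_rpow (by positivity) (by linarith) hr₁0.le
        have h8 : (2 * a ^ 2) ^ (ε + (3 : ℝ) / 2) ≤ 8 * (1 + a ^ 2) ^ r₁ := by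
          rw [he5]
          exact mul_le_mul h6 h7 (Real.rpow_nonneg (by positivity) _) (by norm_num)
        have h9 : (1 + a ^ 2) ^ (-r₁) * (2 * a ^ 2) ^ (ε + (3 : ℝ) / 2)
            ≤ (1 + a ^ 2) ^ (-r₁) * (8 * (1 + a ^ 2) ^ r₁) :=
          mul_le_mul_of_nonneg_left h8 (Real.rpow_nonneg (by positivity) _)
        have h10 : (1 + a ^ 2) ^ (-r₁) * (8 * (1 + a ^ 2) ^ r₁) = 8 := by
          rw [show (1 + a ^ 2) ^ (-r₁) * (8 * (1 + a ^ 2) ^ r₁)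
              = 8 * ((1 + a ^ 2) ^ (-r₁) * (1 + a ^ 2) ^ r₁) by ring,
            ← Real.rpow_add (by positivity : (0 : ℝ) < 1 + a ^ 2)]
          norm_num
        linarith
      nlinarith [hmain, hR_ge]
    have hDle : D ≤ 4 ^ r₁ * (8 * R) := by
      have he : D = 4 ^ r₁ * ((1 + a ^ 2) ^ (-r₁)
          * ((2 * a ^ 2 / s) ^ ε * s ^ ((3 : ℝ) / 2 + ε))) := by rw [hDdef]; ring
      rw [he]
      exact mul_le_mul_of_nonneg_left hkey h4r.le
    have hsum : (∫ y, f y) = (∫ y in A, f y) + ∫ y in Aᶜ, f y := (integral_add_compl hA hf).symm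
    have h2 : D * c₁ ≤ 4 ^ r₁ * (8 * R) * c₁ := mul_le_mul_of_nonneg_right hDle hc₁
    have hAc2 : (∫ y in A, f y) ≤ 4 ^ r₁ * (8 * R) * c₁ := le_trans hAc h2
    have hfinal : (∫ y, f y) ≤ (8 * c₀ + 4 ^ r₁ * 8 * c₁ + 1) * R := by
      rw [hsum]
      nlinarith [hAc2, hBc, hR0]
    exact hfinal
end

section
/- Let c > 0 and r₂ > 19/10. There exists N₀ > 0 such that for every N ≥ N₀ there is a constant C > 0 (depending on c, r₂, N) such that for all t ≥ 0 and all x ∈ ℝ³, ∫_{ℝ³} (1 + (|x−y| − c t)²/(1+t))^{−N} (1 + |y|²)^{−r₂} dy ≤ C (1 + (|x| − c t)²/(1+t))^{−1}. -/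
/-!
Write `τ = 1 + t` and `a = ‖x‖ - c t`, so that the right-hand side is `τ / (τ + a²)`.
If `a² ≤ τ` this is at least `1/2`, and the integral is at most `∫ ⟨y⟩^(-2r₂)`.
Otherwise, for `‖y‖ ≤ |a|/2` the reverse triangle inequality keeps the profile at `x - y`
below `4 τ / (τ + a²)`. For `‖y‖ > |a|/2` one factor `⟨y⟩⁻² ≤ 4 / a²` is taken out of the weight,
and the rest is split by Young's inequality with exponents `5/2`, `5/3`: in polar coordinates the
profile has `L¹` norm `≲ √τ (τ + c²t²) ≲ τ^(5/2)`, while `⟨y⟩^(-10(r₂-1)/3)` is integrable on `ℝ³`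
precisely because `r₂ > 19/10`.
-/

open MeasureTheory Real Set Metric Module

lemma rpow_neg_le_inv {x m : ℝ} (hx : 1 ≤ x) (hm : 1 ≤ m) : x ^ (-m) ≤ x⁻¹ := by
  rw [← rpow_neg_one]
  exact rpow_le_rpow_of_exponent_le hx (by linarith)

section Cauchy

variable {τ : ℝ} (hτ : 0 < τ) (b : ℝ)
include hτ

lemma sq_sub_div_eq_sq_div_sqrt (s : ℝ) : (s - b) ^ 2 / τ = ((s - b) / √τ) ^ 2 := by
  rw [div_pow, sq_sqrt hτ.le]

lemma integrable_inv_one_add_sq_sub_div :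
    Integrable fun s : ℝ => (1 + (s - b) ^ 2 / τ)⁻¹ := by
  simp_rw [sq_sub_div_eq_sq_div_sqrt hτ b]
  exact (integrable_inv_one_add_sq.comp_div (sqrt_pos.2 hτ).ne').comp_sub_right b

lemma integral_inv_one_add_sq_sub_div :
    ∫ s : ℝ, (1 + (s - b) ^ 2 / τ)⁻¹ = π * √τ := by
  simp_rw [sq_sub_div_eq_sq_div_sqrt hτ b]
  rw [integral_sub_right_eq_self (fun s => (1 + (s / √τ) ^ 2)⁻¹) b,
    Measure.integral_comp_div (fun u => (1 + u ^ 2)⁻¹), integral_univ_inv_one_add_sq,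
    abs_of_nonneg (sqrt_nonneg τ), smul_eq_mul, mul_comm]

lemma one_le_one_add_sq_sub_div (s : ℝ) : 1 ≤ 1 + (s - b) ^ 2 / τ :=
  le_add_of_nonneg_right (by positivity)

variable {m : ℝ} (hm : 1 ≤ m)
include hm

lemma integrable_one_add_sq_sub_div_rpow_neg :
    Integrable fun s : ℝ => (1 + (s - b) ^ 2 / τ) ^ (-m) := by
  refine (integrable_inv_one_add_sq_sub_div hτ b).mono'
    ((Continuous.rpow_const (by fun_prop) fun _ => Or.inl (by positivity)).aestronglyMeasurable)
    (.of_forall fun s => ?_)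
  rw [norm_of_nonneg (by positivity)]
  exact rpow_neg_le_inv (one_le_one_add_sq_sub_div hτ b s) hm

lemma integral_one_add_sq_sub_div_rpow_neg_le :
    ∫ s : ℝ, (1 + (s - b) ^ 2 / τ) ^ (-m) ≤ π * √τ := by
  rw [← integral_inv_one_add_sq_sub_div hτ b]
  exact integral_mono (integrable_one_add_sq_sub_div_rpow_neg hτ b hm)
    (integrable_inv_one_add_sq_sub_div hτ b)
    fun s => rpow_neg_le_inv (one_le_one_add_sq_sub_div hτ b s) hm

end Cauchy

section Radial

variable {τ : ℝ} (hτ : 0 < τ) (b : ℝ) {m : ℝ}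
include hτ

lemma sq_mul_rpow_neg_le (r : ℝ) :
    r ^ 2 * (1 + (r - b) ^ 2 / τ) ^ (-m) ≤
      2 * τ * (1 + (r - b) ^ 2 / τ) ^ (-(m - 1)) + 2 * b ^ 2 * (1 + (r - b) ^ 2 / τ) ^ (-m) := by
  set u := 1 + (r - b) ^ 2 / τ
  have hu : 0 < u := by positivity
  have hτu : τ * u = τ + (r - b) ^ 2 := by simp only [u]; field_simp
  have hr : r ^ 2 ≤ 2 * τ * u + 2 * b ^ 2 := by nlinarith [sq_nonneg (r - 2 * b)]
  calc r ^ 2 * u ^ (-m) ≤ (2 * τ * u + 2 * b ^ 2) * u ^ (-m) := by gcongr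
    _ = _ := by rw [show -(m - 1) = 1 + -m by ring, rpow_add hu, rpow_one]; ring

variable (hm : 2 ≤ m)
include hm

lemma integrable_sq_mul_rpow_neg_majorant :
    Integrable fun r : ℝ =>
      2 * τ * (1 + (r - b) ^ 2 / τ) ^ (-(m - 1)) + 2 * b ^ 2 * (1 + (r - b) ^ 2 / τ) ^ (-m) :=
  ((integrable_one_add_sq_sub_div_rpow_neg hτ b (by linarith)).const_mul _).add
    ((integrable_one_add_sq_sub_div_rpow_neg hτ b (by linarith)).const_mul _)

lemma integrableOn_Ioi_sq_mul_rpow_neg :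
    IntegrableOn (fun r : ℝ => r ^ 2 * (1 + (r - b) ^ 2 / τ) ^ (-m)) (Ioi 0) := by
  refine Integrable.integrableOn ((integrable_sq_mul_rpow_neg_majorant hτ b hm).mono' ?_
    (.of_forall fun r => ?_))
  · exact (Continuous.mul (by fun_prop) (Continuous.rpow_const (by fun_prop)
      fun _ => Or.inl (by positivity))).aestronglyMeasurable
  · rw [norm_of_nonneg (by positivity)]
    exact sq_mul_rpow_neg_le hτ b r

lemma integral_Ioi_sq_mul_rpow_neg_le :
    ∫ r in Ioi 0, r ^ 2 * (1 + (r - b) ^ 2 / τ) ^ (-m) ≤ 2 * π * √τ * (τ + b ^ 2) := by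
  have hmajorant := integrable_sq_mul_rpow_neg_majorant hτ b hm
  calc ∫ r in Ioi 0, r ^ 2 * (1 + (r - b) ^ 2 / τ) ^ (-m)
      ≤ ∫ r in Ioi 0, (2 * τ * (1 + (r - b) ^ 2 / τ) ^ (-(m - 1)) +
          2 * b ^ 2 * (1 + (r - b) ^ 2 / τ) ^ (-m)) :=
        setIntegral_mono (integrableOn_Ioi_sq_mul_rpow_neg hτ b hm) hmajorant.integrableOn
          (sq_mul_rpow_neg_le hτ b)
    _ ≤ ∫ r, (2 * τ * (1 + (r - b) ^ 2 / τ) ^ (-(m - 1)) +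
          2 * b ^ 2 * (1 + (r - b) ^ 2 / τ) ^ (-m)) :=
        setIntegral_le_integral hmajorant (.of_forall fun r => by positivity)
    _ = 2 * τ * (∫ r, (1 + (r - b) ^ 2 / τ) ^ (-(m - 1))) +
          2 * b ^ 2 * ∫ r, (1 + (r - b) ^ 2 / τ) ^ (-m) := by
        rw [integral_add ((integrable_one_add_sq_sub_div_rpow_neg hτ b (by linarith)).const_mul _)
          ((integrable_one_add_sq_sub_div_rpow_neg hτ b (by linarith)).const_mul _),
          integral_const_mul, integral_const_mul]
    _ ≤ 2 * τ * (π * √τ) + 2 * b ^ 2 * (π * √τ) := by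
        gcongr
        · exact integral_one_add_sq_sub_div_rpow_neg_le hτ b (by linarith)
        · exact integral_one_add_sq_sub_div_rpow_neg_le hτ b (by linarith)
    _ = 2 * π * √τ * (τ + b ^ 2) := by ring

end Radial

/-- Young's inequality for `(τ^(-3/5) u) (τ^(3/5) v)`. -/
lemma mul_le_rpow_five_halves_add_rpow_five_thirds {τ u v : ℝ} (hτ : 0 < τ) (hu : 0 ≤ u)
    (hv : 0 ≤ v) : u * v ≤ τ ^ (-3 / 2 : ℝ) * u ^ (5 / 2 : ℝ) + τ * v ^ (5 / 3 : ℝ) := by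
  have hpq : (5 / 2 : ℝ).HolderConjugate (5 / 3) := ⟨by norm_num, by norm_num, by norm_num⟩
  have hyoung := young_inequality_of_nonneg (mul_nonneg (rpow_nonneg hτ.le (-3 / 5)) hu)
    (mul_nonneg (rpow_nonneg hτ.le (3 / 5)) hv) hpq
  rw [mul_rpow (by positivity) hu, mul_rpow (by positivity) hv, ← rpow_mul hτ.le,
    ← rpow_mul hτ.le] at hyoung
  have hτuv : τ ^ (-3 / 5 : ℝ) * u * (τ ^ (3 / 5 : ℝ) * v) = u * v := by
    rw [mul_mul_mul_comm, ← rpow_add hτ]; norm_num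
  rw [show (-3 / 5 : ℝ) * (5 / 2) = -3 / 2 by norm_num, show (3 / 5 : ℝ) * (5 / 3) = 1 by norm_num,
    rpow_one, hτuv] at hyoung
  have h1 : 0 ≤ τ ^ (-3 / 2 : ℝ) * u ^ (5 / 2 : ℝ) := by positivity
  have h2 : 0 ≤ τ * v ^ (5 / 3 : ℝ) := by positivity
  linarith

section Profile

variable {E : Type*} [NormedAddCommGroup E]

/-- At time `t`, the Huygens profile of the wave is `huygensProfile (1 + t) (c * t) N`. -/
noncomputable def huygensProfile (τ b m : ℝ) (z : E) : ℝ := (1 + (‖z‖ - b) ^ 2 / τ) ^ (-m)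

variable {τ b m : ℝ}

lemma huygensProfile_nonneg (hτ : 0 ≤ τ) (z : E) : 0 ≤ huygensProfile τ b m z := by
  unfold huygensProfile; positivity

lemma huygensProfile_le_one (hτ : 0 ≤ τ) (hm : 0 ≤ m) (z : E) : huygensProfile τ b m z ≤ 1 :=
  rpow_le_one_of_one_le_of_nonpos (le_add_of_nonneg_right (by positivity)) (by linarith)

lemma huygensProfile_rpow (hτ : 0 ≤ τ) (p : ℝ) (z : E) :
    huygensProfile τ b m z ^ p = huygensProfile τ b (m * p) z := by
  unfold huygensProfile
  rw [← rpow_mul (by positivity), neg_mul]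

lemma huygensProfile_one (z : E) :
    huygensProfile τ b 1 z = (1 + (‖z‖ - b) ^ 2 / τ)⁻¹ :=
  rpow_neg_one _

lemma continuous_huygensProfile (hτ : 0 < τ) : Continuous (huygensProfile τ b m : E → ℝ) :=
  Continuous.rpow_const (by fun_prop) fun _ => Or.inl (by positivity)

lemma huygensProfile_sub_le (hτ : 0 < τ) (hm : 1 ≤ m) {x y : E}
    (hy : 2 * ‖y‖ ≤ |‖x‖ - b|) : huygensProfile τ b m (x - y) ≤ 4 * huygensProfile τ b 1 x := by
  have hshift : |‖x‖ - b| / 2 ≤ |‖x - y‖ - b| := by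
    have := abs_sub_abs_le_abs_sub (‖x‖ - b) (‖x - y‖ - b)
    have := abs_norm_sub_norm_le x (x - y)
    rw [sub_sub_cancel] at this
    rw [sub_sub_sub_cancel_right] at *
    linarith
  have hsq : (‖x‖ - b) ^ 2 / 4 ≤ (‖x - y‖ - b) ^ 2 := by
    rw [← sq_abs, ← sq_abs (‖x - y‖ - b)]
    nlinarith [abs_nonneg (‖x‖ - b)]
  have hD : 1 + (‖x‖ - b) ^ 2 / τ ≤ 4 * (1 + (‖x - y‖ - b) ^ 2 / τ) := by
    rw [mul_add, mul_one, ← mul_div_assoc]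
    gcongr <;> linarith
  calc huygensProfile τ b m (x - y) ≤ (1 + (‖x - y‖ - b) ^ 2 / τ)⁻¹ :=
        rpow_neg_le_inv (le_add_of_nonneg_right (by positivity)) hm
    _ ≤ (4⁻¹ * (1 + (‖x‖ - b) ^ 2 / τ))⁻¹ := by
        gcongr
        linarith
    _ = 4 * huygensProfile τ b 1 x := by rw [huygensProfile_one, mul_inv, inv_inv]

end Profile

lemma rpow_neg_le_div_mul_rpow_neg_sub_one {a ρ r : ℝ} (hρ : 0 ≤ ρ) (ha : |a| < 2 * ρ) :
    (1 + ρ ^ 2) ^ (-r) ≤ 4 / (4 + a ^ 2) * (1 + ρ ^ 2) ^ (-(r - 1)) := by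
  have ha2 : a ^ 2 ≤ 4 * ρ ^ 2 := by
    rw [← sq_abs]; nlinarith [abs_nonneg a]
  rw [show -r = -1 + -(r - 1) by ring, rpow_add (by positivity), rpow_neg_one]
  gcongr
  rw [inv_eq_one_div, div_le_div_iff₀ (by positivity) (by positivity)]
  linarith

section Space

variable {E : Type*} [NormedAddCommGroup E] [NormedSpace ℝ E] [FiniteDimensional ℝ E]
  [MeasurableSpace E] [BorelSpace E] (μ : Measure E) [μ.IsAddHaarMeasure]

lemma integrable_one_add_norm_sq_rpow_neg {s : ℝ} (hs : (finrank ℝ E : ℝ) < 2 * s) :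
    Integrable (fun y : E => (1 + ‖y‖ ^ 2) ^ (-s)) μ := by
  simpa [neg_div, mul_div_cancel_left₀] using integrable_rpow_neg_one_add_norm_sq (μ := μ) hs

variable (hE : finrank ℝ E = 3) {τ : ℝ} (hτ : 0 < τ) (b : ℝ) {m : ℝ} (hm : 2 ≤ m)
include hE hτ hm

lemma integrable_huygensProfile : Integrable (huygensProfile τ b m : E → ℝ) μ := by
  have : Nontrivial E := Module.nontrivial_of_finrank_eq_succ hE
  refine (integrable_fun_norm_addHaar μ (f := fun r => (1 + (r - b) ^ 2 / τ) ^ (-m))).2 ?_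
  simpa [hE] using integrableOn_Ioi_sq_mul_rpow_neg hτ b hm

lemma integral_huygensProfile_le :
    ∫ z, huygensProfile τ b m z ∂μ ≤ 6 * π * μ.real (ball 0 1) * √τ * (τ + b ^ 2) := by
  have : Nontrivial E := Module.nontrivial_of_finrank_eq_succ hE
  rw [show (huygensProfile τ b m : E → ℝ) = fun z => (fun r => (1 + (r - b) ^ 2 / τ) ^ (-m)) ‖z‖
    from rfl, integral_fun_norm_addHaar μ, hE]
  simp only [Nat.add_one_sub_one, smul_eq_mul, nsmul_eq_mul, Nat.cast_ofNat]
  calc 3 * (μ.real (ball 0 1) * ∫ r in Ioi 0, r ^ 2 * (1 + (r - b) ^ 2 / τ) ^ (-m))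
      ≤ 3 * (μ.real (ball 0 1) * (2 * π * √τ * (τ + b ^ 2))) := by
        gcongr
        exact integral_Ioi_sq_mul_rpow_neg_le hτ b hm
    _ = _ := by ring

end Space

lemma rpow_neg_three_halves_mul_le {τ b c : ℝ} (hτ : 1 ≤ τ) (hb : 0 ≤ b) (hbc : b ≤ c * τ) :
    τ ^ (-3 / 2 : ℝ) * (√τ * (τ + b ^ 2)) ≤ (1 + c ^ 2) * τ := by
  have hτ0 : 0 < τ := by linarith
  have hpow : τ ^ (-3 / 2 : ℝ) * √τ = τ⁻¹ := by
    rw [sqrt_eq_rpow, ← rpow_add hτ0, ← rpow_neg_one]; norm_num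
  have hb2 : b ^ 2 ≤ c ^ 2 * τ ^ 2 := by rw [← mul_pow]; gcongr
  rw [← mul_assoc, hpow, inv_mul_le_iff₀ hτ0]
  nlinarith

lemma four_div_four_add_sq_mul_le {τ a : ℝ} (hτ : 0 < τ) (ha : τ < a ^ 2) :
    4 / (4 + a ^ 2) * τ ≤ 8 * (1 + a ^ 2 / τ)⁻¹ := by
  rw [show (1 + a ^ 2 / τ)⁻¹ = τ / (τ + a ^ 2) by field_simp, div_mul_eq_mul_div, mul_div_assoc',
    div_le_div_iff₀ (by positivity) (by positivity)]
  nlinarith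

section Convolution

variable {E : Type*} [NormedAddCommGroup E] {τ b N r : ℝ}

lemma huygensProfile_sub_mul_le (hτ : 0 < τ) (hN : 1 ≤ N) (x y : E) :
    huygensProfile τ b N (x - y) * (1 + ‖y‖ ^ 2) ^ (-r) ≤
      4 * huygensProfile τ b 1 x * (1 + ‖y‖ ^ 2) ^ (-r) +
        4 / (4 + (‖x‖ - b) ^ 2) * (τ ^ (-3 / 2 : ℝ) * huygensProfile τ b (N * (5 / 2)) (x - y) +
          τ * (1 + ‖y‖ ^ 2) ^ (-((r - 1) * (5 / 3)))) := by
  have hP := huygensProfile_nonneg hτ.le (b := b) (m := N) (x - y)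
  have hP' := huygensProfile_nonneg hτ.le (b := b) (m := N * (5 / 2)) (x - y)
  have hP₁ := huygensProfile_nonneg hτ.le (b := b) (m := 1) x
  rcases le_or_gt (2 * ‖y‖) |‖x‖ - b| with hnear | hfar
  · refine le_add_of_le_of_nonneg ?_ (by positivity)
    gcongr
    exact huygensProfile_sub_le hτ hN hnear
  · refine le_add_of_nonneg_of_le (by positivity) ?_
    have hw : 0 ≤ (1 + ‖y‖ ^ 2) ^ (-(r - 1)) := by positivity
    calc huygensProfile τ b N (x - y) * (1 + ‖y‖ ^ 2) ^ (-r)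
        ≤ huygensProfile τ b N (x - y) *
            (4 / (4 + (‖x‖ - b) ^ 2) * (1 + ‖y‖ ^ 2) ^ (-(r - 1))) := by
          gcongr
          exact rpow_neg_le_div_mul_rpow_neg_sub_one (norm_nonneg y) hfar
      _ = 4 / (4 + (‖x‖ - b) ^ 2) *
            (huygensProfile τ b N (x - y) * (1 + ‖y‖ ^ 2) ^ (-(r - 1))) := by ring
      _ ≤ _ := by
          gcongr
          rw [← huygensProfile_rpow hτ.le, ← neg_mul, rpow_mul (by positivity)]
          exact mul_le_rpow_five_halves_add_rpow_five_thirds hτ hP hw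

lemma integrable_huygensProfile_sub_mul [MeasurableSpace E] [OpensMeasurableSpace E]
    {μ : Measure E} (hτ : 0 < τ) (hN : 0 ≤ N) (x : E)
    (hψ : Integrable (fun y : E => (1 + ‖y‖ ^ 2) ^ (-r)) μ) :
    Integrable (fun y => huygensProfile τ b N (x - y) * (1 + ‖y‖ ^ 2) ^ (-r)) μ := by
  refine hψ.mono' (Continuous.aestronglyMeasurable ?_) (.of_forall fun y => ?_)
  · exact ((continuous_huygensProfile hτ).comp (continuous_sub_left x)).mul
      (Continuous.rpow_const (by fun_prop) fun _ => Or.inl (by positivity))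
  · rw [norm_of_nonneg (mul_nonneg (huygensProfile_nonneg hτ.le _) (by positivity))]
    exact mul_le_of_le_one_left (by positivity) (huygensProfile_le_one hτ.le hN _)

lemma integral_huygensProfile_sub_mul_le_of_sq_le [MeasurableSpace E] [OpensMeasurableSpace E]
    {μ : Measure E} (hτ : 0 < τ) (hN : 0 ≤ N) {x : E}
    (hx : (‖x‖ - b) ^ 2 ≤ τ) (hψ : Integrable (fun y : E => (1 + ‖y‖ ^ 2) ^ (-r)) μ) :
    ∫ y, huygensProfile τ b N (x - y) * (1 + ‖y‖ ^ 2) ^ (-r) ∂μ ≤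
      2 * (∫ y, (1 + ‖y‖ ^ 2) ^ (-r) ∂μ) * huygensProfile τ b 1 x := by
  calc ∫ y, huygensProfile τ b N (x - y) * (1 + ‖y‖ ^ 2) ^ (-r) ∂μ
      ≤ ∫ y, (1 + ‖y‖ ^ 2) ^ (-r) ∂μ :=
        integral_mono (integrable_huygensProfile_sub_mul hτ hN x hψ) hψ fun y =>
          mul_le_of_le_one_left (by positivity) (huygensProfile_le_one hτ.le hN _)
    _ ≤ _ := by
        rw [mul_right_comm]
        refine le_mul_of_one_le_left (integral_nonneg fun y => by positivity) ?_
        rw [huygensProfile_one, ← div_eq_mul_inv, le_div_iff₀ (by positivity), one_mul]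
        linarith [(div_le_one hτ).2 hx]

variable [NormedSpace ℝ E] [FiniteDimensional ℝ E] [MeasurableSpace E] [BorelSpace E]
  (μ : Measure E) [μ.IsAddHaarMeasure]

lemma rpow_neg_three_halves_mul_integral_huygensProfile_sub_le (hE : finrank ℝ E = 3) {c m : ℝ}
    (hτ : 1 ≤ τ) (hb : 0 ≤ b) (hbc : b ≤ c * τ) (hm : 2 ≤ m) (x : E) :
    τ ^ (-3 / 2 : ℝ) * ∫ y, huygensProfile τ b m (x - y) ∂μ ≤
      τ * (6 * π * μ.real (ball 0 1) * (1 + c ^ 2)) := by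
  rw [integral_sub_left_eq_self (huygensProfile τ b m) μ x]
  calc τ ^ (-3 / 2 : ℝ) * ∫ z, huygensProfile τ b m z ∂μ
      ≤ τ ^ (-3 / 2 : ℝ) * (6 * π * μ.real (ball 0 1) * √τ * (τ + b ^ 2)) := by
        gcongr
        exact integral_huygensProfile_le μ hE (by linarith) b hm
    _ = 6 * π * μ.real (ball 0 1) * (τ ^ (-3 / 2 : ℝ) * (√τ * (τ + b ^ 2))) := by ring
    _ ≤ 6 * π * μ.real (ball 0 1) * ((1 + c ^ 2) * τ) :=
        mul_le_mul_of_nonneg_left (rpow_neg_three_halves_mul_le hτ hb hbc) (by positivity)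
    _ = _ := by ring

lemma integral_huygensProfile_sub_mul_le_of_lt_sq (hE : finrank ℝ E = 3) {c : ℝ} (hτ : 1 ≤ τ)
    (hb : 0 ≤ b) (hbc : b ≤ c * τ) (hN : 1 ≤ N) (hr : 19 / 10 < r) {x : E}
    (hx : τ < (‖x‖ - b) ^ 2) :
    ∫ y, huygensProfile τ b N (x - y) * (1 + ‖y‖ ^ 2) ^ (-r) ∂μ ≤
      (4 * ∫ y, (1 + ‖y‖ ^ 2) ^ (-r) ∂μ) * huygensProfile τ b 1 x +
        8 * (6 * π * μ.real (ball 0 1) * (1 + c ^ 2) +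
          ∫ y, (1 + ‖y‖ ^ 2) ^ (-((r - 1) * (5 / 3))) ∂μ) * huygensProfile τ b 1 x := by
  have hτ0 : 0 < τ := by linarith
  set K := 6 * π * μ.real (ball 0 1)
  have hψ : Integrable (fun y : E => (1 + ‖y‖ ^ 2) ^ (-r)) μ :=
    integrable_one_add_norm_sq_rpow_neg μ (by rw [hE]; push_cast; linarith)
  have hw : Integrable (fun y : E => (1 + ‖y‖ ^ 2) ^ (-((r - 1) * (5 / 3)))) μ :=
    integrable_one_add_norm_sq_rpow_neg μ (by rw [hE]; push_cast; linarith)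
  have hP'int : Integrable (fun y => huygensProfile τ b (N * (5 / 2)) (x - y)) μ :=
    (integrable_huygensProfile μ hE hτ0 b (by linarith)).comp_sub_left x
  have hfar_int : Integrable (fun y =>
      τ ^ (-3 / 2 : ℝ) * huygensProfile τ b (N * (5 / 2)) (x - y) +
        τ * (1 + ‖y‖ ^ 2) ^ (-((r - 1) * (5 / 3)))) μ :=
    (hP'int.const_mul _).add (hw.const_mul τ)
  have hK : 0 ≤ K := by positivity
  have h8 : 4 / (4 + (‖x‖ - b) ^ 2) * τ ≤ 8 * huygensProfile τ b 1 x := by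
    rw [huygensProfile_one]; exact four_div_four_add_sq_mul_le hτ0 hx
  have hW : 0 ≤ ∫ y, (1 + ‖y‖ ^ 2) ^ (-((r - 1) * (5 / 3))) ∂μ :=
    integral_nonneg fun y => by positivity
  calc ∫ y, huygensProfile τ b N (x - y) * (1 + ‖y‖ ^ 2) ^ (-r) ∂μ
      ≤ ∫ y, (4 * huygensProfile τ b 1 x * (1 + ‖y‖ ^ 2) ^ (-r) +
          4 / (4 + (‖x‖ - b) ^ 2) * (τ ^ (-3 / 2 : ℝ) * huygensProfile τ b (N * (5 / 2)) (x - y) +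
            τ * (1 + ‖y‖ ^ 2) ^ (-((r - 1) * (5 / 3))))) ∂μ :=
        integral_mono (integrable_huygensProfile_sub_mul hτ0 (by linarith) x hψ)
          ((hψ.const_mul _).add (hfar_int.const_mul _)) (huygensProfile_sub_mul_le hτ0 hN x)
    _ = 4 * huygensProfile τ b 1 x * (∫ y, (1 + ‖y‖ ^ 2) ^ (-r) ∂μ) + 4 / (4 + (‖x‖ - b) ^ 2) *
          (τ ^ (-3 / 2 : ℝ) * (∫ y, huygensProfile τ b (N * (5 / 2)) (x - y) ∂μ) +
            τ * ∫ y, (1 + ‖y‖ ^ 2) ^ (-((r - 1) * (5 / 3))) ∂μ) := by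
        rw [integral_add (hψ.const_mul _) (hfar_int.const_mul _), integral_const_mul,
          integral_const_mul, integral_add (hP'int.const_mul _) (hw.const_mul _),
          integral_const_mul, integral_const_mul]
    _ ≤ 4 * huygensProfile τ b 1 x * (∫ y, (1 + ‖y‖ ^ 2) ^ (-r) ∂μ) +
          4 / (4 + (‖x‖ - b) ^ 2) * τ *
            (K * (1 + c ^ 2) + ∫ y, (1 + ‖y‖ ^ 2) ^ (-((r - 1) * (5 / 3))) ∂μ) := by
        have hI := rpow_neg_three_halves_mul_integral_huygensProfile_sub_le μ hE hτ hb hbc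
          (by linarith : 2 ≤ N * (5 / 2)) x
        have h4 : 0 ≤ 4 / (4 + (‖x‖ - b) ^ 2) := by positivity
        linarith [mul_le_mul_of_nonneg_left hI h4]
    _ ≤ _ := by
        have := mul_le_mul_of_nonneg_right h8
          (add_nonneg (mul_nonneg hK (by positivity : (0 : ℝ) ≤ 1 + c ^ 2)) hW)
        linarith

theorem exists_integral_huygensProfile_sub_mul_le (hE : finrank ℝ E = 3) (c : ℝ)
    (hr : 19 / 10 < r) :
    ∃ C > 0, ∀ τ b N : ℝ, 1 ≤ τ → 0 ≤ b → b ≤ c * τ → 1 ≤ N → ∀ x : E,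
      ∫ y, huygensProfile τ b N (x - y) * (1 + ‖y‖ ^ 2) ^ (-r) ∂μ ≤
        C * huygensProfile τ b 1 x := by
  set Ψ := ∫ y, (1 + ‖y‖ ^ 2) ^ (-r) ∂μ
  set W := ∫ y, (1 + ‖y‖ ^ 2) ^ (-((r - 1) * (5 / 3))) ∂μ
  set K := 6 * π * μ.real (ball 0 1)
  have hΨ : 0 ≤ Ψ := integral_nonneg fun y => by positivity
  have hW : 0 ≤ W := integral_nonneg fun y => by positivity
  have hK : 0 < K := by
    have : 0 < μ.real (ball 0 1) :=
      ENNReal.toReal_pos (measure_ball_pos μ 0 one_pos).ne' measure_ball_lt_top.ne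
    positivity
  refine ⟨6 * Ψ + 8 * (K * (1 + c ^ 2) + W), by positivity, fun τ b N hτ hb hbc hN x => ?_⟩
  have hτ0 : 0 < τ := by linarith
  have hP₁ : 0 ≤ huygensProfile τ b 1 x := huygensProfile_nonneg hτ0.le x
  rcases le_or_gt ((‖x‖ - b) ^ 2) τ with hsmall | hlarge
  · have hψ : Integrable (fun y : E => (1 + ‖y‖ ^ 2) ^ (-r)) μ :=
      integrable_one_add_norm_sq_rpow_neg μ (by rw [hE]; push_cast; linarith)
    have := integral_huygensProfile_sub_mul_le_of_sq_le hτ0 (by linarith : (0 : ℝ) ≤ N) hsmall hψ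
    nlinarith [mul_nonneg (mul_nonneg hK.le (by positivity : (0 : ℝ) ≤ 1 + c ^ 2)) hP₁,
      mul_nonneg hW hP₁, mul_nonneg hΨ hP₁]
  · have := integral_huygensProfile_sub_mul_le_of_lt_sq μ hE hτ hb hbc hN hr hlarge
    nlinarith [mul_nonneg hΨ hP₁]

end Convolution

/-- Estimate ℐ₃ of Lemma A.3: convolution of the Huygens wave profile with a
spatially decaying initial datum. -/
theorem stmt_2 (c r₂ : ℝ) (hc : 0 < c) (hr₂ : r₂ > 19 / 10) :
    ∃ N₀ : ℝ, 0 < N₀ ∧ ∀ N : ℝ, N₀ ≤ N →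
      ∃ C : ℝ, 0 < C ∧ ∀ t : ℝ, 0 ≤ t → ∀ x : EuclideanSpace ℝ (Fin 3),
        (∫ y : EuclideanSpace ℝ (Fin 3),
            (1 + (‖x - y‖ - c * t) ^ 2 / (1 + t)) ^ (-N) * (1 + ‖y‖ ^ 2) ^ (-r₂))
          ≤ C * (1 + (‖x‖ - c * t) ^ 2 / (1 + t)) ^ (-1 : ℝ) := by
  obtain ⟨C, hC, hconv⟩ := exists_integral_huygensProfile_sub_mul_le volume
    finrank_euclideanSpace_fin c hr₂
  refine ⟨1, one_pos, fun N hN => ⟨C, hC, fun t ht x => ?_⟩⟩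
  exact hconv (1 + t) (c * t) N (by linarith) (by positivity) (by nlinarith) hN x
end

section
/- There exists a constant C > 0 such that for all t ≥ 0 and all x ∈ ℝ³, ∫₀ᵗ ∫_{ℝ³} (1 + t − τ)^{−2} (1 + |x−y|²/(1+t−τ))^{−2} (1 + τ)^{−3} (1 + |y|²/(1+τ))^{−3} dy dτ ≤ C (1+t)^{−2} (1 + |x|²/(1+t))^{−3/2}. -/
/-!
With `u = 1 + t - τ` and `v = 1 + τ` the integrand is `(u + |x - y|²)⁻² (v + |y|²)⁻³`.
The two brackets add up to at least `N / 2`, where `N = 1 + t + |x|²`, because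
`|x|² ≤ 2 (|x - y|² + |y|²)`; so for every `y` one of them is at least `N / 4`. Replacing that
factor by its value at `N / 4` and integrating the other one in `y` by scaling, the inner
integral is at most a constant times `N⁻² (1 + τ)^(-3/2) + N⁻³`. Integrating in `τ` gives
`N⁻² + t N⁻³`, and both terms are at most `(1 + t)^(-1/2) N^(-3/2)`, which is the right-hand side.
-/

open MeasureTheory Real Set Module

lemma rpow_mul_one_add_div_rpow {w b : ℝ} (hw : 0 < w) (hb : 0 ≤ b) (q : ℝ) :
    w ^ q * (1 + b / w) ^ q = (w + b) ^ q := by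
  rw [← mul_rpow hw.le (by positivity), mul_one_add, mul_div_cancel₀ _ hw.ne']

lemma add_norm_sq_rpow_eq {E : Type*} [NormedAddCommGroup E] [NormedSpace ℝ E] {v : ℝ}
    (hv : 0 < v) (q : ℝ) (y : E) :
    (v + ‖y‖ ^ 2) ^ q = v ^ q * (1 + ‖(√v)⁻¹ • y‖ ^ 2) ^ q := by
  rw [norm_smul, mul_pow, norm_inv, norm_of_nonneg (sqrt_nonneg v), inv_pow, sq_sqrt hv.le,
    inv_mul_eq_div, rpow_mul_one_add_div_rpow hv (by positivity)]

lemma integral_mul_le_of_forall_le_or_le {α : Type*} [MeasurableSpace α] {μ : Measure α}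
    {f g : α → ℝ} (hf : Integrable f μ) (hg : Integrable g μ) (hf0 : 0 ≤ f) (hg0 : 0 ≤ g)
    {a b : ℝ} (ha : 0 ≤ a) (hb : 0 ≤ b) (h : ∀ y, f y ≤ a ∨ g y ≤ b) :
    ∫ y, f y * g y ∂μ ≤ a * ∫ y, g y ∂μ + b * ∫ y, f y ∂μ := by
  have hfg : ∀ y, f y * g y ≤ a * g y + b * f y := fun y => by
    rcases h y with hy | hy
    · nlinarith [mul_le_mul_of_nonneg_right hy (hg0 y), mul_nonneg hb (hf0 y)]
    · nlinarith [mul_le_mul_of_nonneg_left hy (hf0 y), mul_nonneg ha (hg0 y)]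
  rw [← integral_const_mul, ← integral_const_mul, ← integral_add (hg.const_mul a) (hf.const_mul b)]
  exact integral_mono_of_nonneg (.of_forall fun y => mul_nonneg (hf0 y) (hg0 y))
    ((hg.const_mul a).add (hf.const_mul b)) (.of_forall hfg)

lemma le_add_norm_sub_sq_or_le_add_norm_sq {E : Type*} [SeminormedAddCommGroup E]
    {u v N : ℝ} {x : E} (hN : N ≤ 2 * (u + v) + ‖x‖ ^ 2) (y : E) :
    N / 4 ≤ u + ‖x - y‖ ^ 2 ∨ N / 4 ≤ v + ‖y‖ ^ 2 := by
  have hx : ‖x‖ ≤ ‖x - y‖ + ‖y‖ := norm_le_norm_sub_add x y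
  by_contra! h
  nlinarith [norm_nonneg y, norm_nonneg x, sq_nonneg (‖x - y‖ - ‖y‖)]

section HaarMeasure

variable {E : Type*} [NormedAddCommGroup E] [NormedSpace ℝ E] [FiniteDimensional ℝ E]
  [MeasurableSpace E] [BorelSpace E] (μ : Measure E) [μ.IsAddHaarMeasure]

lemma integral_add_norm_sq_rpow {v : ℝ} (hv : 0 < v) (q : ℝ) :
    ∫ y, (v + ‖y‖ ^ 2) ^ q ∂μ = v ^ (q + finrank ℝ E / 2) * ∫ z, (1 + ‖z‖ ^ 2) ^ q ∂μ := by
  simp_rw [add_norm_sq_rpow_eq hv q]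
  rw [integral_const_mul, Measure.integral_comp_smul μ (fun z => (1 + ‖z‖ ^ 2) ^ q), smul_eq_mul,
    inv_pow, inv_inv, abs_of_nonneg (by positivity), ← mul_assoc, rpow_add hv,
    sqrt_eq_rpow, ← rpow_mul_natCast hv.le, one_div_mul_eq_div]

lemma integrable_add_norm_sq_rpow {v q : ℝ} (hv : 0 < v) (hq : q < -(finrank ℝ E / 2)) :
    Integrable (fun y : E => (v + ‖y‖ ^ 2) ^ q) μ := by
  have h1 : Integrable (fun z : E => (1 + ‖z‖ ^ 2) ^ q) μ := by
    simpa [neg_div_neg_eq, mul_div_cancel_left₀] using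
      integrable_rpow_neg_one_add_norm_sq (μ := μ) (r := -2 * q) (by linarith)
  simp_rw [add_norm_sq_rpow_eq hv q]
  exact (h1.comp_smul (inv_ne_zero (sqrt_pos.2 hv).ne')).const_mul _

lemma integral_one_add_norm_sq_rpow_pos {q : ℝ} (hq : q < -(finrank ℝ E / 2)) :
    0 < ∫ z, (1 + ‖z‖ ^ 2) ^ q ∂μ := by
  rw [integral_pos_iff_support_of_nonneg (fun z => by positivity)
    (integrable_add_norm_sq_rpow μ one_pos hq),
    Function.support_eq_univ fun z => (by positivity : (0 : ℝ) < _).ne']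
  exact μ.measure_univ_pos.2 (NeZero.ne μ)

lemma integral_add_norm_sub_sq_rpow_mul_le {u v N p q : ℝ} {x : E} (hu : 0 < u) (hv : 0 < v)
    (hN0 : 0 < N) (hN : N ≤ 2 * (u + v) + ‖x‖ ^ 2) (hp : p < -(finrank ℝ E / 2))
    (hq : q < -(finrank ℝ E / 2)) :
    ∫ y, (u + ‖x - y‖ ^ 2) ^ p * (v + ‖y‖ ^ 2) ^ q ∂μ ≤
      (N / 4) ^ p * (v ^ (q + finrank ℝ E / 2) * ∫ z, (1 + ‖z‖ ^ 2) ^ q ∂μ) +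
        (N / 4) ^ q * (u ^ (p + finrank ℝ E / 2) * ∫ z, (1 + ‖z‖ ^ 2) ^ p ∂μ) := by
  have hd : (0 : ℝ) ≤ finrank ℝ E / 2 := by positivity
  have hN4 : 0 < N / 4 := by positivity
  rw [← integral_add_norm_sq_rpow μ hv, ← integral_add_norm_sq_rpow μ hu,
    ← integral_sub_left_eq_self (fun y => (u + ‖y‖ ^ 2) ^ p) μ x]
  refine integral_mul_le_of_forall_le_or_le
    ((integrable_add_norm_sq_rpow μ hu hp).comp_sub_left x) (integrable_add_norm_sq_rpow μ hv hq)
    (fun y => by positivity) (fun y => by positivity) (by positivity) (by positivity) fun y => ?_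
  exact (le_add_norm_sub_sq_or_le_add_norm_sq hN y).imp
    (fun h => rpow_le_rpow_of_nonpos hN4 h (by linarith))
    (fun h => rpow_le_rpow_of_nonpos hN4 h (by linarith))

end HaarMeasure

lemma setIntegral_Icc_one_add_rpow_le {t r : ℝ} (ht : 0 ≤ t) (hr : r < -1) :
    ∫ τ in Icc 0 t, (1 + τ) ^ r ≤ -(r + 1)⁻¹ := by
  have h0 : (0 : ℝ) ∉ uIcc (1 + 0) (1 + t) := by
    rw [uIcc_of_le (by linarith)]; exact fun h => by linarith [h.1]
  rw [integral_Icc_eq_integral_Ioc, ← intervalIntegral.integral_of_le ht,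
    intervalIntegral.integral_comp_add_left (fun x => x ^ r),
    integral_rpow (Or.inr ⟨hr.ne, h0⟩), add_zero, one_rpow, div_le_iff_of_neg (by linarith),
    neg_mul, inv_mul_cancel₀ (by linarith)]
  linarith [rpow_nonneg (by linarith : (0 : ℝ) ≤ 1 + t) (r + 1)]

lemma setIntegral_Icc_le_of_le_one_add_rpow {F : ℝ → ℝ} {t r A B : ℝ} (ht : 0 ≤ t)
    (hr : r < -1) (hA : 0 ≤ A) (hF0 : ∀ τ ∈ Icc 0 t, 0 ≤ F τ)
    (hF : ∀ τ ∈ Icc 0 t, F τ ≤ A * (1 + τ) ^ r + B) :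
    ∫ τ in Icc 0 t, F τ ≤ A * -(r + 1)⁻¹ + B * t := by
  have hint : IntegrableOn (fun τ : ℝ => (1 + τ) ^ r) (Icc 0 t) :=
    ((continuousOn_id.const_add 1).rpow_const fun τ hτ =>
      Or.inl (by dsimp; linarith [hτ.1])).integrableOn_Icc
  calc ∫ τ in Icc 0 t, F τ ≤ ∫ τ in Icc 0 t, (A * (1 + τ) ^ r + B) :=
        integral_mono_of_nonneg (ae_restrict_of_forall_mem measurableSet_Icc hF0)
          ((hint.const_mul A).add (integrableOn_const (by simp)))
          (ae_restrict_of_forall_mem measurableSet_Icc hF)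
    _ = A * (∫ τ in Icc 0 t, (1 + τ) ^ r) + B * t := by
        rw [integral_add (hint.const_mul A) (integrableOn_const (by simp)), integral_const_mul,
          setIntegral_const, Real.volume_real_Icc_of_le ht, sub_zero, smul_eq_mul, mul_comm t]
    _ ≤ A * -(r + 1)⁻¹ + B * t := by
        gcongr; exact setIntegral_Icc_one_add_rpow_le ht hr

lemma rpow_neg_two_mul_one_add_div_rpow {T a : ℝ} (hT : 0 < T) (ha : 0 ≤ a) :
    T ^ (-2 : ℝ) * (1 + a / T) ^ (-(3 / 2) : ℝ) = T ^ (-(1 / 2) : ℝ) * (T + a) ^ (-(3 / 2) : ℝ) := by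
  rw [← rpow_mul_one_add_div_rpow hT ha, ← mul_assoc, ← rpow_add hT]
  norm_num

lemma rpow_neg_two_le {T N : ℝ} (hT : 0 < T) (hTN : T ≤ N) :
    N ^ (-2 : ℝ) ≤ T ^ (-(1 / 2) : ℝ) * N ^ (-(3 / 2) : ℝ) := by
  have hN : 0 < N := hT.trans_le hTN
  calc N ^ (-2 : ℝ) = N ^ (-(1 / 2) : ℝ) * N ^ (-(3 / 2) : ℝ) := by rw [← rpow_add hN]; norm_num
    _ ≤ T ^ (-(1 / 2) : ℝ) * N ^ (-(3 / 2) : ℝ) :=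
      mul_le_mul_of_nonneg_right (rpow_le_rpow_of_nonpos hT hTN (by norm_num)) (by positivity)

lemma rpow_neg_three_mul_le {T N : ℝ} (hT : 0 < T) (hTN : T ≤ N) :
    N ^ (-3 : ℝ) * T ≤ T ^ (-(1 / 2) : ℝ) * N ^ (-(3 / 2) : ℝ) := by
  have hN : 0 < N := hT.trans_le hTN
  calc N ^ (-3 : ℝ) * T = N ^ (-(3 / 2) : ℝ) * T ^ (1 : ℝ) * N ^ (-(3 / 2) : ℝ) := by
        rw [rpow_one, mul_right_comm, ← rpow_add hN]; norm_num
    _ ≤ T ^ (-(3 / 2) : ℝ) * T ^ (1 : ℝ) * N ^ (-(3 / 2) : ℝ) := by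
      gcongr ?_ * _ * _; exact rpow_le_rpow_of_nonpos hT hTN (by norm_num)
    _ = T ^ (-(1 / 2) : ℝ) * N ^ (-(3 / 2) : ℝ) := by rw [← rpow_add hT]; norm_num

lemma finrank_euclideanSpace_three_div_two :
    (finrank ℝ (EuclideanSpace ℝ (Fin 3)) : ℝ) / 2 = 3 / 2 := by
  simp

lemma integral_wave_mul_wave_le {u v N : ℝ} {x : EuclideanSpace ℝ (Fin 3)} (hu : 1 ≤ u)
    (hv : 0 < v) (hN0 : 0 < N) (hN : N ≤ 2 * (u + v) + ‖x‖ ^ 2) :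
    ∫ y : EuclideanSpace ℝ (Fin 3),
        u ^ (-2 : ℝ) * (1 + ‖x - y‖ ^ 2 / u) ^ (-2 : ℝ) * v ^ (-3 : ℝ) * (1 + ‖y‖ ^ 2 / v) ^ (-3 : ℝ)
      ≤ (N / 4) ^ (-2 : ℝ) * (∫ z : EuclideanSpace ℝ (Fin 3), (1 + ‖z‖ ^ 2) ^ (-3 : ℝ)) *
            v ^ (-(3 / 2) : ℝ) +
          (N / 4) ^ (-3 : ℝ) * ∫ z : EuclideanSpace ℝ (Fin 3), (1 + ‖z‖ ^ 2) ^ (-2 : ℝ) := by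
  have hu0 : 0 < u := by linarith
  have hd := finrank_euclideanSpace_three_div_two
  have hform : ∀ y : EuclideanSpace ℝ (Fin 3),
      u ^ (-2 : ℝ) * (1 + ‖x - y‖ ^ 2 / u) ^ (-2 : ℝ) * v ^ (-3 : ℝ) * (1 + ‖y‖ ^ 2 / v) ^ (-3 : ℝ)
        = (u + ‖x - y‖ ^ 2) ^ (-2 : ℝ) * (v + ‖y‖ ^ 2) ^ (-3 : ℝ) := fun y => by
    rw [← rpow_mul_one_add_div_rpow hu0 (sq_nonneg ‖x - y‖),
      ← rpow_mul_one_add_div_rpow hv (sq_nonneg ‖y‖), mul_assoc]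
  simp_rw [hform]
  refine (integral_add_norm_sub_sq_rpow_mul_le volume hu0 hv hN0 hN (by rw [hd]; norm_num)
    (by rw [hd]; norm_num)).trans ?_
  have hu' : u ^ (-2 + 3 / 2 : ℝ) ≤ 1 := rpow_le_one_of_one_le_of_nonpos hu (by norm_num)
  have hc₂ : 0 ≤ ∫ z : EuclideanSpace ℝ (Fin 3), (1 + ‖z‖ ^ 2) ^ (-2 : ℝ) :=
    integral_nonneg fun z => by positivity
  have hlast := mul_le_mul_of_nonneg_left (mul_le_of_le_one_left hc₂ hu')
    (by positivity : (0 : ℝ) ≤ (N / 4) ^ (-3 : ℝ))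
  rw [hd, show (-3 : ℝ) + 3 / 2 = -(3 / 2) by norm_num]
  linarith

/-- Estimate K₁ of Lemma A.4: diffusion wave convolved with a nonlinear
diffusion wave. -/
theorem stmt_3 :
    ∃ C : ℝ, 0 < C ∧ ∀ t : ℝ, 0 ≤ t → ∀ x : EuclideanSpace ℝ (Fin 3),
      (∫ τ in Set.Icc (0 : ℝ) t, ∫ y : EuclideanSpace ℝ (Fin 3),
          (1 + t - τ) ^ (-2 : ℝ) * (1 + ‖x - y‖ ^ 2 / (1 + t - τ)) ^ (-2 : ℝ)
            * (1 + τ) ^ (-3 : ℝ) * (1 + ‖y‖ ^ 2 / (1 + τ)) ^ (-3 : ℝ))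
        ≤ C * (1 + t) ^ (-2 : ℝ) * (1 + ‖x‖ ^ 2 / (1 + t)) ^ (-(3 / 2) : ℝ) := by
  set c₂ := ∫ z : EuclideanSpace ℝ (Fin 3), (1 + ‖z‖ ^ 2) ^ (-2 : ℝ)
  set c₃ := ∫ z : EuclideanSpace ℝ (Fin 3), (1 + ‖z‖ ^ 2) ^ (-3 : ℝ)
  have hc₂ : 0 < c₂ := integral_one_add_norm_sq_rpow_pos volume
    (by rw [finrank_euclideanSpace_three_div_two]; norm_num)
  have hc₃ : 0 < c₃ := integral_one_add_norm_sq_rpow_pos volume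
    (by rw [finrank_euclideanSpace_three_div_two]; norm_num)
  refine ⟨32 * c₃ + 64 * c₂, by positivity, fun t ht x => ?_⟩
  set N := 1 + t + ‖x‖ ^ 2
  have hT : 0 < 1 + t := by linarith
  have hTN : 1 + t ≤ N := le_add_of_nonneg_right (sq_nonneg _)
  calc _ ≤ (N / 4) ^ (-2 : ℝ) * c₃ * -(-(3 / 2) + 1)⁻¹ + (N / 4) ^ (-3 : ℝ) * c₂ * t :=
        setIntegral_Icc_le_of_le_one_add_rpow ht (by norm_num) (by positivity)
          (fun τ hτ => integral_nonneg fun y => by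
            have : 0 < 1 + t - τ := by linarith [hτ.2]
            have : 0 < 1 + τ := by linarith [hτ.1]
            positivity)
          (fun τ hτ => integral_wave_mul_wave_le (by linarith [hτ.2]) (by linarith [hτ.1])
            (by positivity) (by linarith))
    _ = 32 * c₃ * N ^ (-2 : ℝ) + 64 * c₂ * (N ^ (-3 : ℝ) * t) := by
        rw [div_rpow (by positivity) (by norm_num), div_rpow (by positivity) (by norm_num)]
        norm_num
        ring
    _ ≤ 32 * c₃ * ((1 + t) ^ (-(1 / 2) : ℝ) * N ^ (-(3 / 2) : ℝ)) +
          64 * c₂ * ((1 + t) ^ (-(1 / 2) : ℝ) * N ^ (-(3 / 2) : ℝ)) := by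
        have h3 : N ^ (-3 : ℝ) * t ≤ (1 + t) ^ (-(1 / 2) : ℝ) * N ^ (-(3 / 2) : ℝ) :=
          (mul_le_mul_of_nonneg_left (by linarith : t ≤ 1 + t) (by positivity)).trans
            (rpow_neg_three_mul_le hT hTN)
        gcongr
        exact rpow_neg_two_le hT hTN
    _ = _ := by
        rw [mul_assoc _ ((1 + t) ^ _), rpow_neg_two_mul_one_add_div_rpow hT (sq_nonneg _)]
        ring
end

section
/- Let n ≥ 1 be an integer and r > n/2. There exists a constant C > 0 (depending only on n and r) such that for all a ≥ 0 and all b > 0, ∫_{ℝⁿ} (1 + (|y| − a)²/b)^{−r} dy ≤ C (b^{n/2} + b^{1/2} a^{n−1}). -/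
/-!
In polar coordinates the integral is `n |B₁| ∫₀^∞ ρ^(n-1) (1 + (ρ - a)²/b)^(-r) dρ`. Bounding
`ρ^(n-1) ≤ 2^(n-2) (|ρ - a|^(n-1) + a^(n-1))` and substituting `ρ = a + √b u` leaves the two
one-dimensional integrals `∫ |u|^(n-1) (1 + u²)^(-r)` and `∫ (1 + u²)^(-r)`, which converge
because `2r > n`, with prefactors `b^(n/2)` and `b^(1/2) a^(n-1)`.
-/

open MeasureTheory Set Module Real

lemma integrable_abs_pow_mul_one_add_sq_rpow_neg {r : ℝ} {k : ℕ} (hk : (k : ℝ) + 1 < 2 * r) :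
    Integrable fun u : ℝ => |u| ^ k * (1 + u ^ 2) ^ (-r) := by
  have hdom : Integrable fun u : ℝ => (1 + ‖u‖ ^ 2) ^ (-(2 * r - k) / 2) :=
    integrable_rpow_neg_one_add_norm_sq (by rw [finrank_self]; push_cast; linarith)
  refine hdom.mono' (by fun_prop) (Filter.Eventually.of_forall fun u => ?_)
  have hpos : 0 < 1 + u ^ 2 := by positivity
  have habs : |u| ≤ (1 + u ^ 2) ^ (1 / 2 : ℝ) := by
    rw [← sqrt_eq_rpow]
    exact abs_le_sqrt (by linarith)
  rw [norm_of_nonneg (by positivity), norm_eq_abs, sq_abs]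
  calc |u| ^ k * (1 + u ^ 2) ^ (-r)
      ≤ ((1 + u ^ 2) ^ (1 / 2 : ℝ)) ^ k * (1 + u ^ 2) ^ (-r) := by gcongr
    _ = (1 + u ^ 2) ^ (-(2 * r - k) / 2) := by
        rw [← rpow_mul_natCast hpos.le, ← rpow_add hpos]
        ring_nf

lemma integral_comp_sub_div (F : ℝ → ℝ) (a : ℝ) {c : ℝ} (hc : 0 < c) :
    ∫ ρ, F ((ρ - a) / c) = c * ∫ u, F u := by
  rw [integral_sub_right_eq_self (fun ρ => F (ρ / c)) a, Measure.integral_comp_div,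
    abs_of_pos hc, smul_eq_mul]

lemma setIntegral_Ioi_pow_mul_comp_sub_div_le {h : ℝ → ℝ} (h_nonneg : ∀ u, 0 ≤ h u) {k : ℕ}
    (hk : Integrable fun u => |u| ^ k * h u) (h0 : Integrable h) {a c : ℝ} (ha : 0 ≤ a)
    (hc : 0 < c) :
    ∫ ρ in Ioi 0, ρ ^ k * h ((ρ - a) / c)
      ≤ 2 ^ (k - 1) * c * (c ^ k * (∫ u, |u| ^ k * h u) + a ^ k * ∫ u, h u) := by
  set G : ℝ → ℝ := fun ρ =>
    2 ^ (k - 1) * (c ^ k * (|(ρ - a) / c| ^ k * h ((ρ - a) / c)) + a ^ k * h ((ρ - a) / c))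
  have hk' : Integrable fun ρ => |(ρ - a) / c| ^ k * h ((ρ - a) / c) :=
    (hk.comp_div hc.ne').comp_sub_right a
  have h0' : Integrable fun ρ => h ((ρ - a) / c) := (h0.comp_div hc.ne').comp_sub_right a
  have hG : Integrable G := ((hk'.const_mul _).add (h0'.const_mul _)).const_mul _
  have hpow : ∀ ρ, 0 < ρ → ρ ^ k ≤ 2 ^ (k - 1) * (c ^ k * |(ρ - a) / c| ^ k + a ^ k) := by
    intro ρ hρ
    rw [abs_div, abs_of_pos hc, div_pow, mul_div_cancel₀ _ (pow_pos hc k).ne']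
    calc ρ ^ k ≤ (|ρ - a| + a) ^ k := by gcongr; linarith [le_abs_self (ρ - a)]
      _ ≤ _ := add_pow_le (abs_nonneg _) ha k
  calc ∫ ρ in Ioi 0, ρ ^ k * h ((ρ - a) / c)
      ≤ ∫ ρ in Ioi 0, G ρ := by
        refine integral_mono_of_nonneg ?_ hG.integrableOn ?_ <;>
          filter_upwards [ae_restrict_mem measurableSet_Ioi] with ρ (hρ : 0 < ρ)
        · have := h_nonneg ((ρ - a) / c)
          positivity
        · have := mul_le_mul_of_nonneg_right (hpow ρ hρ) (h_nonneg ((ρ - a) / c))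
          simp only [G]
          linarith
    _ ≤ ∫ ρ, G ρ := setIntegral_le_integral hG (.of_forall fun ρ => by
        have := h_nonneg ((ρ - a) / c)
        positivity)
    _ = _ := by
        simp only [G]
        rw [integral_const_mul, integral_add (hk'.const_mul _) (h0'.const_mul _),
          integral_const_mul, integral_const_mul,
          integral_comp_sub_div (fun u => |u| ^ k * h u) a hc, integral_comp_sub_div h a hc]
        ring

theorem integral_one_add_sq_norm_sub_div_rpow_neg_le {E : Type*} [NormedAddCommGroup E]
    [NormedSpace ℝ E] [FiniteDimensional ℝ E] [MeasurableSpace E] [BorelSpace E]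
    (μ : Measure E) [μ.IsAddHaarMeasure] {k : ℕ} (hE : finrank ℝ E = k + 1) {r : ℝ}
    (hr : (k : ℝ) + 1 < 2 * r) {a b : ℝ} (ha : 0 ≤ a) (hb : 0 < b) :
    ∫ y, (1 + (‖y‖ - a) ^ 2 / b) ^ (-r) ∂μ
      ≤ (k + 1) * μ.real (Metric.ball 0 1) * 2 ^ (k - 1) * √b *
        (√b ^ k * (∫ u : ℝ, |u| ^ k * (1 + u ^ 2) ^ (-r)) +
          a ^ k * ∫ u : ℝ, (1 + u ^ 2) ^ (-r)) := by
  have : Nontrivial E := nontrivial_of_finrank_pos (R := ℝ) (by omega)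
  have hsq : ∀ ρ, (ρ - a) ^ 2 / b = ((ρ - a) / √b) ^ 2 := fun ρ => by
    rw [div_pow, sq_sqrt hb.le]
  have h0 : Integrable fun u : ℝ => (1 + u ^ 2) ^ (-r) := by
    simpa using integrable_abs_pow_mul_one_add_sq_rpow_neg (k := 0) (r := r)
      (by push_cast; linarith)
  rw [integral_fun_norm_addHaar μ fun ρ => (1 + (ρ - a) ^ 2 / b) ^ (-r), hE,
    Nat.add_sub_cancel]
  simp only [hsq, nsmul_eq_mul, smul_eq_mul, ← mul_assoc]
  calc _ ≤ (k + 1) * μ.real (Metric.ball 0 1) * (2 ^ (k - 1) * √b * (√b ^ k *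
        (∫ u : ℝ, |u| ^ k * (1 + u ^ 2) ^ (-r)) + a ^ k * ∫ u : ℝ, (1 + u ^ 2) ^ (-r))) := by
        push_cast
        gcongr
        exact setIntegral_Ioi_pow_mul_comp_sub_div_le (h := fun u => (1 + u ^ 2) ^ (-r))
          (fun u => by positivity) (integrable_abs_pow_mul_one_add_sq_rpow_neg hr) h0 ha
          (sqrt_pos.2 hb)
    _ = _ := by ring

/-- Volume bound for a fattened sphere of radius `a` and thickness `√b`:
∫_{ℝⁿ} (1 + (|y| − a)²/b)^{−r} dy ≤ C (b^{n/2} + b^{1/2} a^{n−1}). -/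
theorem stmt_10 (n : ℕ) (hn : 1 ≤ n) (r : ℝ) (hr : r > n / 2) :
    ∃ C : ℝ, 0 < C ∧ ∀ a : ℝ, 0 ≤ a → ∀ b : ℝ, 0 < b →
      (∫ y : EuclideanSpace ℝ (Fin n), (1 + (‖y‖ - a) ^ 2 / b) ^ (-r))
        ≤ C * (b ^ ((n : ℝ) / 2) + b ^ ((1 : ℝ) / 2) * a ^ ((n : ℝ) - 1)) := by
  obtain ⟨k, rfl⟩ : ∃ k, n = k + 1 := ⟨n - 1, by omega⟩
  set J₁ := ∫ u : ℝ, |u| ^ k * (1 + u ^ 2) ^ (-r)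
  set J₀ := ∫ u : ℝ, (1 + u ^ 2) ^ (-r)
  set K := (k + 1 : ℝ) * volume.real (Metric.ball (0 : EuclideanSpace ℝ (Fin (k + 1))) 1) *
    2 ^ (k - 1)
  have hJ₁ : 0 ≤ J₁ := integral_nonneg fun u => by positivity
  have hJ₀ : 0 ≤ J₀ := integral_nonneg fun u => by positivity
  have hK : 0 ≤ K := by positivity
  refine ⟨K * (J₁ + J₀) + 1, by positivity, fun a ha b hb => ?_⟩
  have hX : √b * √b ^ k = b ^ (((k + 1 : ℕ) : ℝ) / 2) := by
    rw [← pow_succ', sqrt_eq_rpow, ← rpow_natCast, ← rpow_mul hb.le]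
    ring_nf
  have hY : a ^ k = a ^ (((k + 1 : ℕ) : ℝ) - 1) := by
    rw [Nat.cast_succ, add_sub_cancel_right, rpow_natCast]
  have hY₀ : 0 ≤ b ^ ((1 : ℝ) / 2) * a ^ k := by positivity
  calc _ ≤ K * √b * (√b ^ k * J₁ + a ^ k * J₀) :=
        integral_one_add_sq_norm_sub_div_rpow_neg_le volume finrank_euclideanSpace_fin
          (by push_cast at hr; linarith) ha hb
    _ = K * (b ^ (((k + 1 : ℕ) : ℝ) / 2) * J₁ + b ^ ((1 : ℝ) / 2) * a ^ k * J₀) := by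
        rw [← hX, sqrt_eq_rpow]
        ring
    _ ≤ _ := by
        rw [← hY]
        nlinarith [mul_nonneg (mul_nonneg hK hY₀) hJ₁, mul_nonneg (mul_nonneg hK hJ₀)
          (rpow_nonneg hb.le (((k + 1 : ℕ) : ℝ) / 2)), rpow_nonneg hb.le (((k + 1 : ℕ) : ℝ) / 2)]
end

section
/- Let β₁, β₄, ν⁺, ν⁻, σ⁺, σ⁻ > 0 and suppose D := (β₁ν⁻ + β₄ν⁺)² − 4(β₁+β₄)(β₁σ⁻ + β₄σ⁺) > 0. For r > 0 define the quartic polynomial p_r(λ) = λ⁴ + (ν⁺+ν⁻)r² λ³ + [(β₁+β₄)r² + (σ⁺+σ⁻+ν⁺ν⁻)r⁴] λ² + [(β₁ν⁻+β₄ν⁺)r⁴ + (ν⁺σ⁻+ν⁻σ⁺)r⁶] λ + (β₁σ⁻+β₄σ⁺)r⁶ + σ⁺σ⁻ r⁸. Then there exist η₁ > 0 and functions λ₁, λ₂, λ₃, λ₄ : (0, η₁] → ℂ such that for every r ∈ (0, η₁] the multiset {λ₁(r), λ₂(r), λ₃(r), λ₄(r)} is exactly the multiset of roots of p_r, λ₂(r)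 is the complex conjugate of λ₁(r), λ₃(r) and λ₄(r) are real, and as r → 0⁺: λ₁(r) = −((β₁ν⁺+β₄ν⁻)/(2(β₁+β₄))) r² + i √(β₁+β₄) r + O(r³), λ₃(r) = ((−(β₁ν⁻+β₄ν⁺) + √D)/(2(β₁+β₄))) r² + O(r⁴), and λ₄(r) = ((−(β₁ν⁻+β₄ν⁺) − √D)/(2(β₁+β₄))) r² + O(r⁴). -/
/-!
With `β = β₁ + β₄`, `B = β₁ν⁻ + β₄ν⁺`, `C = β₁σ⁻ + β₄σ⁺`, the substitution `λ = r² μ` turns `p_r`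
into `r⁶ (β μ² + B μ + C + r² h(μ))` for a fixed quartic `h`. Since `D > 0` the quadratic has two
simple real roots `x₊ > x₋`, and the intermediate value theorem gives real roots
`λ₃, λ₄ = x± r² + O(r⁴)`. Dividing `p_r` by `(λ - λ₃)(λ - λ₄)` leaves a real quadratic
`λ² + P λ + Q` with `P = (ν⁺ + ν⁻ + x₊ + x₋) r² + O(r⁴)` and `Q = β r² + O(r⁴)`, so for small `r`
its roots are the conjugate pair `-P/2 ± i √(Q - P²/4)`, and `√(Q - P²/4) = √β r + O(r³)`.
-/

open Filter Topology Asymptotics ComplexConjugate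

theorem Real.abs_sqrt_sub_sqrt_le_div {x y : ℝ} (hy : 0 < y) :
    |√x - √y| ≤ |x - y| / √y := by
  have hsy : 0 < √y := Real.sqrt_pos.2 hy
  rw [le_div_iff₀ hsy]
  rcases le_or_gt 0 x with hx | hx
  · calc |√x - √y| * √y ≤ |√x - √y| * (√x + √y) := by
          gcongr
          exact le_add_of_nonneg_left (Real.sqrt_nonneg x)
      _ = |(√x - √y) * (√x + √y)| := by
          rw [abs_mul, abs_of_nonneg (by positivity : 0 ≤ √x + √y)]
      _ = |x - y| := by
          congr 1
          nlinarith [Real.sq_sqrt hx, Real.sq_sqrt hy.le]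
  · rw [Real.sqrt_eq_zero'.2 hx.le, zero_sub, abs_neg, abs_of_pos hsy,
      Real.mul_self_sqrt hy.le, abs_of_neg (by linarith)]
    linarith

theorem exists_zero_near_of_mul_nonpos {f : ℝ → ℝ} (hf : Continuous f) {x₀ ε : ℝ}
    (hε : 0 ≤ ε) (h : f (x₀ - ε) * f (x₀ + ε) ≤ 0) : ∃ x, |x - x₀| ≤ ε ∧ f x = 0 := by
  have h0 : (0 : ℝ) ∈ Set.uIcc (f (x₀ - ε)) (f (x₀ + ε)) := by
    rw [Set.mem_uIcc]
    rcases mul_nonpos_iff.1 h with h | h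
    · exact Or.inr ⟨h.2, h.1⟩
    · exact Or.inl h
  obtain ⟨x, hx, hfx⟩ := intermediate_value_uIcc hf.continuousOn h0
  rw [Set.uIcc_of_le (by linarith)] at hx
  exact ⟨x, abs_sub_le_iff.2 ⟨by linarith [hx.2], by linarith [hx.1]⟩, hfx⟩

theorem exists_root_near_of_small_perturbation {β x₀ x₁ ε : ℝ} {g : ℝ → ℝ} (hg : Continuous g)
    (hε : 0 ≤ ε) (hβε : 2 * |β| * ε ≤ |β * (x₀ - x₁)|)
    (hgε : ∀ y, |y - x₀| ≤ ε → |g y| ≤ ε * |β * (x₀ - x₁)| / 2) :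
    ∃ μ, |μ - x₀| ≤ ε ∧ β * (μ - x₀) * (μ - x₁) + g μ = 0 := by
  set s := β * (x₀ - x₁)
  apply exists_zero_near_of_mul_nonpos (by fun_prop) hε
  -- at `x₀ ± ε` the quadratic is `± ε s + β ε²`, and `|β ε²|, |g| ≤ ε |s| / 2`
  have hlo : β * (x₀ - ε - x₀) * (x₀ - ε - x₁) = -(ε * s) + β * ε ^ 2 := by ring
  have hhi : β * (x₀ + ε - x₀) * (x₀ + ε - x₁) = ε * s + β * ε ^ 2 := by ring
  rw [hlo, hhi]
  have hq : |β * ε ^ 2| ≤ ε * |s| / 2 := by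
    rw [abs_mul, abs_of_nonneg (sq_nonneg ε)]
    nlinarith [mul_le_mul_of_nonneg_left hβε hε]
  have bq := abs_le.1 hq
  have blo := abs_le.1 (hgε (x₀ - ε) (by simp [abs_of_nonneg hε]))
  have bhi := abs_le.1 (hgε (x₀ + ε) (by simp [abs_of_nonneg hε]))
  rcases le_or_gt 0 s with hs | hs
  · rw [abs_of_nonneg hs] at bq blo bhi
    exact mul_nonpos_of_nonpos_of_nonneg (by nlinarith) (by nlinarith)
  · rw [abs_of_neg hs] at bq blo bhi
    exact mul_nonpos_of_nonneg_of_nonpos (by nlinarith) (by nlinarith)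

theorem exists_root_of_perturbed_quadratic {β x₀ x₁ : ℝ} (hβ : β ≠ 0) (hx : x₀ ≠ x₁)
    {h : ℝ → ℝ} (hh : Continuous h) :
    ∃ μ : ℝ → ℝ, (∀ᶠ t in 𝓝 0, β * (μ t - x₀) * (μ t - x₁) + t * h (μ t) = 0) ∧
      (fun t => μ t - x₀) =O[𝓝 0] id := by
  set s := β * (x₀ - x₁)
  have hs : 0 < |s| := abs_pos.2 (mul_ne_zero hβ (sub_ne_zero.2 hx))
  obtain ⟨G, hG⟩ := (isCompact_closedBall x₀ 1).exists_bound_of_continuousOn hh.continuousOn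
  have hG₀ : 0 ≤ G := (norm_nonneg _).trans (hG x₀ (Metric.mem_closedBall_self zero_le_one))
  set K := 2 * G / |s|
  have hKt : Tendsto (fun t : ℝ => K * |t|) (𝓝 0) (𝓝 0) := by
    have : Continuous fun t : ℝ => K * |t| := by fun_prop
    simpa using this.tendsto 0
  have hsmall : ∀ᶠ t in 𝓝 0, K * |t| ≤ 1 ∧ K * |t| ≤ |s| / (2 * |β|) :=
    (hKt.eventually_le_const one_pos).and (hKt.eventually_le_const (by positivity))
  have hroot : ∀ᶠ t in 𝓝 0, ∃ μ, |μ - x₀| ≤ K * |t| ∧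
      β * (μ - x₀) * (μ - x₁) + t * h μ = 0 := by
    filter_upwards [hsmall] with t ⟨h₁, h₂⟩
    refine exists_root_near_of_small_perturbation (by fun_prop) (by positivity)
      (by rwa [le_div_iff₀ (by positivity), mul_comm] at h₂) fun y hy => ?_
    have hy : y ∈ Metric.closedBall x₀ 1 := by
      rw [Metric.mem_closedBall, Real.dist_eq]; linarith
    have hKs : K * |t| * |s| / 2 = G * |t| := by
      simp only [K]; field_simp
    rw [abs_mul, hKs]
    nlinarith [hG y hy, abs_nonneg t, Real.norm_eq_abs (h y)]
  obtain ⟨μ, hμ⟩ := hroot.choice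
  refine ⟨μ, hμ.mono fun t ht => ht.2, IsBigO.of_bound K (hμ.mono fun t ht => ?_)⟩
  simpa only [Real.norm_eq_abs, id] using ht.1

def monicQuartic {R : Type*} [CommRing R] (a₃ a₂ a₁ a₀ z : R) : R :=
  z ^ 4 + a₃ * z ^ 3 + a₂ * z ^ 2 + a₁ * z + a₀

theorem monicQuartic_eq_mul_of_roots {R : Type*} [CommRing R] [IsDomain R]
    {a₃ a₂ a₁ a₀ y₁ y₂ : R} (hne : y₁ ≠ y₂) (h₁ : monicQuartic a₃ a₂ a₁ a₀ y₁ = 0)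
    (h₂ : monicQuartic a₃ a₂ a₁ a₀ y₂ = 0) (z : R) :
    monicQuartic a₃ a₂ a₁ a₀ z = (z - y₁) * (z - y₂) *
      (z ^ 2 + (a₃ + y₁ + y₂) * z + (a₂ + (y₁ + y₂) * (a₃ + y₁ + y₂) - y₁ * y₂)) := by
  -- the difference of the two sides is the linear polynomial `α z + γ`, which vanishes at `y₁ ≠ y₂`
  set α := a₁ - y₁ * y₂ * (a₃ + y₁ + y₂) + (y₁ + y₂) * (a₂ + (y₁ + y₂) * (a₃ + y₁ + y₂) - y₁ * y₂)
  set γ := a₀ - y₁ * y₂ * (a₂ + (y₁ + y₂) * (a₃ + y₁ + y₂) - y₁ * y₂)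
  have hrem : ∀ x, monicQuartic a₃ a₂ a₁ a₀ x = (x - y₁) * (x - y₂) *
      (x ^ 2 + (a₃ + y₁ + y₂) * x + (a₂ + (y₁ + y₂) * (a₃ + y₁ + y₂) - y₁ * y₂)) + (α * x + γ) :=
    fun x => by simp only [monicQuartic, α, γ]; ring
  have hα : α = 0 := by
    have h := hrem y₁ ▸ h₁
    have h' := hrem y₂ ▸ h₂
    simp only [sub_self, mul_zero, zero_mul, zero_add] at h h'
    have : α * (y₁ - y₂) = 0 := by linear_combination h - h'
    exact (mul_eq_zero.1 this).resolve_right (sub_ne_zero.2 hne)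
  have hγ : γ = 0 := by
    have h := hrem y₁ ▸ h₁
    simpa [hα] using h
  rw [hrem, hα, hγ, zero_mul, add_zero, add_zero]

theorem quadratic_eq_mul_conj {P Q : ℝ} (h : P ^ 2 / 4 ≤ Q) (z : ℂ) :
    z ^ 2 + P * z + Q =
      (z - ⟨-P / 2, √(Q - P ^ 2 / 4)⟩) * (z - conj ⟨-P / 2, √(Q - P ^ 2 / 4)⟩) := by
  have hsq : ((√(Q - P ^ 2 / 4) : ℝ) : ℂ) ^ 2 = Q - P ^ 2 / 4 := by
    rw [← Complex.ofReal_pow, Real.sq_sqrt (by linarith)]; push_cast; ring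
  simp only [Complex.mk_eq_add_mul_I, map_add, map_mul, Complex.conj_ofReal, Complex.conj_I]
  push_cast
  linear_combination (-1 : ℂ) * hsq + ((√(Q - P ^ 2 / 4) : ℝ) : ℂ) ^ 2 * Complex.I_sq

theorem eventually_pos_of_sub_isBigO {f : ℝ → ℝ} {c : ℝ} (hc : 0 < c) {m n : ℕ} (hmn : m < n)
    (hf : (fun r => f r - c * r ^ m) =O[𝓝[>] 0] fun r => r ^ n) : ∀ᶠ r in 𝓝[>] 0, 0 < f r := by
  have hlo := hf.trans_isLittleO ((isLittleO_pow_pow hmn).mono nhdsWithin_le_nhds)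
  filter_upwards [hlo.def (half_pos hc), self_mem_nhdsWithin] with r hr (hr0 : 0 < r)
  have hrm : 0 < r ^ m := pow_pos hr0 m
  rw [Real.norm_eq_abs, Real.norm_of_nonneg hrm.le] at hr
  nlinarith [(abs_le.1 hr).1]

theorem sqrt_sub_mul_isBigO {f : ℝ → ℝ} {c : ℝ} (hc : 0 < c) {k : ℕ}
    (hf : (fun r => f r - (c * r) ^ 2) =O[𝓝[>] 0] fun r => r ^ (k + 1)) :
    (fun r => √(f r) - c * r) =O[𝓝[>] 0] fun r => r ^ k := by
  obtain ⟨M, hM⟩ := hf.bound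
  refine IsBigO.of_bound (M / c) ?_
  filter_upwards [hM, self_mem_nhdsWithin] with r hr (hr0 : 0 < r)
  have hcr : 0 < c * r := mul_pos hc hr0
  rw [Real.norm_eq_abs, Real.norm_of_nonneg (pow_pos hr0 _).le] at hr ⊢
  calc |√(f r) - c * r| = |√(f r) - √((c * r) ^ 2)| := by rw [Real.sqrt_sq hcr.le]
    _ ≤ |f r - (c * r) ^ 2| / (c * r) := by
        simpa [Real.sqrt_sq hcr.le] using Real.abs_sqrt_sub_sqrt_le_div (x := f r) (pow_pos hcr 2)
    _ ≤ M * r ^ (k + 1) / (c * r) := by gcongr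
    _ = M / c * r ^ k := by field_simp; ring

theorem exists_forall_Ioc_of_eventually_nhdsGT {p : ℝ → Prop} (h : ∀ᶠ r in 𝓝[>] 0, p r) :
    ∃ δ, 0 < δ ∧ ∀ r, 0 < r → r ≤ δ → p r := by
  obtain ⟨δ, hδ, hp⟩ := (nhdsGT_basis (0 : ℝ)).eventually_iff.1 h
  exact ⟨δ / 2, half_pos hδ, fun r hr hrδ => hp ⟨hr, by linarith⟩⟩

theorem Asymptotics.IsBigO.exists_bound_nhdsGT {E : Type*} [SeminormedAddCommGroup E]
    {f : ℝ → E} {k : ℕ} (h : f =O[𝓝[>] 0] fun r => r ^ k) :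
    ∃ M δ : ℝ, 0 < δ ∧ ∀ r, 0 < r → r ≤ δ → ‖f r‖ ≤ M * r ^ k := by
  obtain ⟨M, hM⟩ := h.bound
  obtain ⟨δ, hδ, hf⟩ := exists_forall_Ioc_of_eventually_nhdsGT hM
  refine ⟨M, δ, hδ, fun r hr hrδ => ?_⟩
  simpa only [Real.norm_of_nonneg (pow_pos hr k).le] using hf r hr hrδ

section LowFrequency

variable (ν β S B T C E : ℝ)

theorem exists_root_near_scaled_root {x₀ x₁ : ℝ} (hβ : β ≠ 0) (hx : x₀ ≠ x₁)
    (hB : β * (x₀ + x₁) = -B) (hC : β * (x₀ * x₁) = C) :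
    ∃ y : ℝ → ℝ, (∀ᶠ r in 𝓝 0, monicQuartic (ν * r ^ 2) (β * r ^ 2 + S * r ^ 4)
        (B * r ^ 4 + T * r ^ 6) (C * r ^ 6 + E * r ^ 8) (y r) = 0) ∧
      (fun r => y r - x₀ * r ^ 2) =O[𝓝 0] fun r => r ^ 4 := by
  obtain ⟨μ, hroot, hμ⟩ :=
    exists_root_of_perturbed_quadratic hβ hx (h := monicQuartic ν S T E) (by
      unfold monicQuartic; fun_prop)
  have hsq : Tendsto (fun r : ℝ => r ^ 2) (𝓝 0) (𝓝 0) := by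
    simpa using (continuous_pow 2).tendsto (0 : ℝ)
  refine ⟨fun r => r ^ 2 * μ (r ^ 2), ?_, ?_⟩
  · filter_upwards [hsq.eventually hroot] with r hr
    have hscale : monicQuartic (ν * r ^ 2) (β * r ^ 2 + S * r ^ 4) (B * r ^ 4 + T * r ^ 6)
        (C * r ^ 6 + E * r ^ 8) (r ^ 2 * μ (r ^ 2)) = r ^ 6 * (β * (μ (r ^ 2) - x₀) *
          (μ (r ^ 2) - x₁) + r ^ 2 * monicQuartic ν S T E (μ (r ^ 2))) := by
      simp only [monicQuartic]
      linear_combination r ^ 6 * μ (r ^ 2) * hB - r ^ 6 * hC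
    rw [hscale, hr, mul_zero]
  · exact ((isBigO_refl (fun r : ℝ => r ^ 2) (𝓝 0)).mul (hμ.comp_tendsto hsq)).congr
      (fun r => by simp only [Function.comp_apply]; ring)
        fun r => by simp only [Function.comp_apply, id]; ring

theorem exists_roots_asymptotics (hβ : 0 < β) {xp xm : ℝ} (hx : xm < xp)
    (hB : β * (xp + xm) = -B) (hC : β * (xp * xm) = C) :
    ∃ η : ℝ, 0 < η ∧ ∃ l₁ l₂ l₃ l₄ : ℝ → ℂ,
      (∀ r : ℝ, 0 < r → r ≤ η →
        (∀ z : ℂ, monicQuartic ((ν * r ^ 2 : ℝ) : ℂ) ((β * r ^ 2 + S * r ^ 4 : ℝ) : ℂ)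
            ((B * r ^ 4 + T * r ^ 6 : ℝ) : ℂ) ((C * r ^ 6 + E * r ^ 8 : ℝ) : ℂ) z
          = (z - l₁ r) * (z - l₂ r) * (z - l₃ r) * (z - l₄ r))
        ∧ l₂ r = conj (l₁ r) ∧ (l₃ r).im = 0 ∧ (l₄ r).im = 0) ∧
      (fun r => l₁ r - (((-((β * ν - B) / (2 * β)) * r ^ 2 : ℝ) : ℂ)
        + Complex.I * ((√β * r : ℝ) : ℂ))) =O[𝓝[>] 0] (fun r => r ^ 3) ∧
      (fun r => l₃ r - ((xp * r ^ 2 : ℝ) : ℂ)) =O[𝓝[>] 0] (fun r => r ^ 4) ∧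
      (fun r => l₄ r - ((xm * r ^ 2 : ℝ) : ℂ)) =O[𝓝[>] 0] (fun r => r ^ 4) := by
  obtain ⟨y₃, hy₃, hy₃O⟩ := exists_root_near_scaled_root ν β S B T C E hβ.ne' hx.ne' hB hC
  obtain ⟨y₄, hy₄, hy₄O⟩ := exists_root_near_scaled_root ν β S B T C E hβ.ne' hx.ne
    (by linear_combination hB) (by linear_combination hC)
  -- `(z - y₃)(z - y₄)` splits off the quartic, leaving `z² + P z + Q`
  set P : ℝ → ℝ := fun r => ν * r ^ 2 + y₃ r + y₄ r
  set Q : ℝ → ℝ := fun r => β * r ^ 2 + S * r ^ 4 + (y₃ r + y₄ r) * P r - y₃ r * y₄ r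
  have h42 : (fun r : ℝ => r ^ 4) =O[𝓝 0] fun r => r ^ 2 :=
    (isLittleO_pow_pow (by norm_num)).isBigO
  have hmul : ∀ {f g : ℝ → ℝ}, f =O[𝓝 0] (fun r => r ^ 2) → g =O[𝓝 0] (fun r => r ^ 2) →
      (fun r => f r * g r) =O[𝓝 0] fun r => r ^ 4 :=
    fun hf hg => (hf.mul hg).congr_right fun r => by ring
  have hy₃2 : y₃ =O[𝓝 0] fun r => r ^ 2 :=
    ((hy₃O.trans h42).add (isBigO_const_mul_self xp _ _)).congr_left fun r => by ring
  have hy₄2 : y₄ =O[𝓝 0] fun r => r ^ 2 :=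
    ((hy₄O.trans h42).add (isBigO_const_mul_self xm _ _)).congr_left fun r => by ring
  have hP : (fun r => P r - (ν + xp + xm) * r ^ 2) =O[𝓝 0] fun r => r ^ 4 :=
    (hy₃O.add hy₄O).congr_left fun r => by ring
  have hP2 : P =O[𝓝 0] fun r => r ^ 2 :=
    ((isBigO_const_mul_self ν _ _).add (hy₃2.add hy₄2)).congr_left fun r => by ring
  have hQ : (fun r => (Q r - P r ^ 2 / 4) - β * r ^ 2) =O[𝓝 0] fun r => r ^ 4 :=
    ((((isBigO_const_mul_self S _ _).add (hmul (hy₃2.add hy₄2) hP2)).sub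
      (hmul hy₃2 hy₄2)).sub ((hmul hP2 hP2).const_mul_left (1 / 4))).congr_left
      fun r => by ring
  have hsep : ∀ᶠ r in 𝓝[>] 0, 0 < y₃ r - y₄ r :=
    eventually_pos_of_sub_isBigO (sub_pos.2 hx) (by norm_num : 2 < 4)
      (((hy₃O.sub hy₄O).congr_left fun r => by ring).mono nhdsWithin_le_nhds)
  have hdisc : ∀ᶠ r in 𝓝[>] 0, 0 < Q r - P r ^ 2 / 4 :=
    eventually_pos_of_sub_isBigO hβ (by norm_num : 2 < 4) (hQ.mono nhdsWithin_le_nhds)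
  obtain ⟨η, hη, hgood⟩ := exists_forall_Ioc_of_eventually_nhdsGT
    (hsep.and (hdisc.and ((hy₃.and hy₄).filter_mono nhdsWithin_le_nhds)))
  refine ⟨η, hη, fun r => ⟨-P r / 2, √(Q r - P r ^ 2 / 4)⟩,
    fun r => conj ⟨-P r / 2, √(Q r - P r ^ 2 / 4)⟩, fun r => y₃ r, fun r => y₄ r,
    fun r hr hrη => ?_, ?_, ?_, ?_⟩
  · obtain ⟨hsep, hdisc, h₃, h₄⟩ := hgood r hr hrη
    refine ⟨fun z => ?_, rfl, Complex.ofReal_im _, Complex.ofReal_im _⟩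
    have hcast : ∀ y, monicQuartic (ν * r ^ 2) (β * r ^ 2 + S * r ^ 4) (B * r ^ 4 + T * r ^ 6)
        (C * r ^ 6 + E * r ^ 8) y = 0 → monicQuartic ((ν * r ^ 2 : ℝ) : ℂ)
        ((β * r ^ 2 + S * r ^ 4 : ℝ) : ℂ) ((B * r ^ 4 + T * r ^ 6 : ℝ) : ℂ)
        ((C * r ^ 6 + E * r ^ 8 : ℝ) : ℂ) y = 0 := fun y hy => by
      simp only [monicQuartic] at hy ⊢
      exact_mod_cast hy
    have hPQ : z ^ 2 + (((ν * r ^ 2 : ℝ) : ℂ) + y₃ r + y₄ r) * z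
        + (((β * r ^ 2 + S * r ^ 4 : ℝ) : ℂ)
          + (y₃ r + y₄ r) * (((ν * r ^ 2 : ℝ) : ℂ) + y₃ r + y₄ r) - y₃ r * y₄ r)
        = z ^ 2 + (P r : ℂ) * z + (Q r : ℂ) := by
      simp only [P, Q]; push_cast; ring
    rw [monicQuartic_eq_mul_of_roots (by exact_mod_cast (sub_pos.1 hsep).ne') (hcast _ h₃)
      (hcast _ h₄), hPQ, quadratic_eq_mul_conj (sub_pos.1 hdisc).le]
    ring
  · have ha : (β * ν - B) / (2 * β) = (ν + xp + xm) / 2 := by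
      field_simp; linear_combination -hB
    have hre : (fun r => -P r / 2 + (β * ν - B) / (2 * β) * r ^ 2) =O[𝓝[>] 0] fun r => r ^ 3 :=
      (((hP.const_mul_left (-1 / 2)).trans (isLittleO_pow_pow (by norm_num)).isBigO).mono
        nhdsWithin_le_nhds).congr_left fun r => by rw [ha]; ring
    have him : (fun r => √(Q r - P r ^ 2 / 4) - √β * r) =O[𝓝[>] 0] fun r => r ^ 3 :=
      sqrt_sub_mul_isBigO (Real.sqrt_pos.2 hβ) ((hQ.mono nhdsWithin_le_nhds).congr_left
        fun r => by rw [mul_pow, Real.sq_sqrt hβ.le])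
    refine ((Complex.isBigO_ofReal_left.2 hre).add
      ((Complex.isBigO_ofReal_left.2 him).const_mul_left Complex.I)).congr_left fun r => ?_
    simp only [Complex.mk_eq_add_mul_I]
    push_cast
    ring
  · exact (Complex.isBigO_ofReal_left.2 (hy₃O.mono nhdsWithin_le_nhds)).congr_left
      fun r => by push_cast; ring
  · exact (Complex.isBigO_ofReal_left.2 (hy₄O.mono nhdsWithin_le_nhds)).congr_left
      fun r => by push_cast; ring

end LowFrequency

theorem stmt_15_general (β₁ β₄ νp νm σp σm : ℝ)
    (hβ₁ : 0 < β₁) (hβ₄ : 0 < β₄)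
    (hD : 0 < (β₁ * νm + β₄ * νp) ^ 2 - 4 * (β₁ + β₄) * (β₁ * σm + β₄ * σp)) :
    ∃ η₁ : ℝ, 0 < η₁ ∧
      ∃ l₁ l₂ l₃ l₄ : ℝ → ℂ,
        (∀ r : ℝ, 0 < r → r ≤ η₁ →
          (∀ z : ℂ,
            z ^ 4 + (((νp + νm) * r ^ 2 : ℝ) : ℂ) * z ^ 3
              + ((((β₁ + β₄) * r ^ 2 + (σp + σm + νp * νm) * r ^ 4 : ℝ)) : ℂ) * z ^ 2
              + ((((β₁ * νm + β₄ * νp) * r ^ 4 + (νp * σm + νm * σp) * r ^ 6 : ℝ)) : ℂ) * z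
              + (((β₁ * σm + β₄ * σp) * r ^ 6 + σp * σm * r ^ 8 : ℝ) : ℂ)
            = (z - l₁ r) * (z - l₂ r) * (z - l₃ r) * (z - l₄ r))
          ∧ l₂ r = starRingEnd ℂ (l₁ r)
          ∧ (l₃ r).im = 0 ∧ (l₄ r).im = 0) ∧
        (∃ M : ℝ, ∃ δ : ℝ, 0 < δ ∧ ∀ r : ℝ, 0 < r → r ≤ δ →
          ‖(l₁ r
              - (((-((β₁ * νp + β₄ * νm) / (2 * (β₁ + β₄))) * r ^ 2 : ℝ) : ℂ)
                + Complex.I * ((Real.sqrt (β₁ + β₄) * r : ℝ) : ℂ)))‖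
            ≤ M * r ^ 3) ∧
        (∃ M : ℝ, ∃ δ : ℝ, 0 < δ ∧ ∀ r : ℝ, 0 < r → r ≤ δ →
          ‖(l₃ r
              - ((((-(β₁ * νm + β₄ * νp)
                    + Real.sqrt ((β₁ * νm + β₄ * νp) ^ 2
                        - 4 * (β₁ + β₄) * (β₁ * σm + β₄ * σp)))
                  / (2 * (β₁ + β₄)) * r ^ 2 : ℝ)) : ℂ))‖
            ≤ M * r ^ 4) ∧
        (∃ M : ℝ, ∃ δ : ℝ, 0 < δ ∧ ∀ r : ℝ, 0 < r → r ≤ δ →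
          ‖(l₄ r
              - ((((-(β₁ * νm + β₄ * νp)
                    - Real.sqrt ((β₁ * νm + β₄ * νp) ^ 2
                        - 4 * (β₁ + β₄) * (β₁ * σm + β₄ * σp)))
                  / (2 * (β₁ + β₄)) * r ^ 2 : ℝ)) : ℂ))‖
            ≤ M * r ^ 4) := by
  have hβ : 0 < β₁ + β₄ := by positivity
  have hsD := Real.sqrt_pos.2 hD
  have hsq := Real.sq_sqrt hD.le
  set s := √((β₁ * νm + β₄ * νp) ^ 2 - 4 * (β₁ + β₄) * (β₁ * σm + β₄ * σp))
  obtain ⟨η, hη, l₁, l₂, l₃, l₄, hfac, h₁, h₃, h₄⟩ :=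
    exists_roots_asymptotics (νp + νm) (β₁ + β₄) (σp + σm + νp * νm) (β₁ * νm + β₄ * νp)
      (νp * σm + νm * σp) (β₁ * σm + β₄ * σp) (σp * σm) hβ
      (xp := (-(β₁ * νm + β₄ * νp) + s) / (2 * (β₁ + β₄)))
      (xm := (-(β₁ * νm + β₄ * νp) - s) / (2 * (β₁ + β₄)))
      (by gcongr; linarith) (by field_simp; ring) (by field_simp; linear_combination -hsq)
  rw [show (β₁ + β₄) * (νp + νm) - (β₁ * νm + β₄ * νp) = β₁ * νp + β₄ * νm by ring] at h₁
  exact ⟨η, hη, l₁, l₂, l₃, l₄, hfac, h₁.exists_bound_nhdsGT, h₃.exists_bound_nhdsGT,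
    h₄.exists_bound_nhdsGT⟩

/-- Lemma 2.1: low-frequency Taylor expansion of the spectrum of the
compressible part of the linearized two-fluid system. -/
theorem stmt_15 (β₁ β₄ νp νm σp σm : ℝ)
    (hβ₁ : 0 < β₁) (hβ₄ : 0 < β₄) (hνp : 0 < νp) (hνm : 0 < νm)
    (hσp : 0 < σp) (hσm : 0 < σm)
    (hD : 0 < (β₁ * νm + β₄ * νp) ^ 2 - 4 * (β₁ + β₄) * (β₁ * σm + β₄ * σp)) :
    ∃ η₁ : ℝ, 0 < η₁ ∧
      ∃ l₁ l₂ l₃ l₄ : ℝ → ℂ,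
        (∀ r : ℝ, 0 < r → r ≤ η₁ →
          (∀ z : ℂ,
            z ^ 4 + (((νp + νm) * r ^ 2 : ℝ) : ℂ) * z ^ 3
              + ((((β₁ + β₄) * r ^ 2 + (σp + σm + νp * νm) * r ^ 4 : ℝ)) : ℂ) * z ^ 2
              + ((((β₁ * νm + β₄ * νp) * r ^ 4 + (νp * σm + νm * σp) * r ^ 6 : ℝ)) : ℂ) * z
              + (((β₁ * σm + β₄ * σp) * r ^ 6 + σp * σm * r ^ 8 : ℝ) : ℂ)
            = (z - l₁ r) * (z - l₂ r) * (z - l₃ r) * (z - l₄ r))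
          ∧ l₂ r = starRingEnd ℂ (l₁ r)
          ∧ (l₃ r).im = 0 ∧ (l₄ r).im = 0) ∧
        (∃ M : ℝ, ∃ δ : ℝ, 0 < δ ∧ ∀ r : ℝ, 0 < r → r ≤ δ →
          ‖(l₁ r
              - (((-((β₁ * νp + β₄ * νm) / (2 * (β₁ + β₄))) * r ^ 2 : ℝ) : ℂ)
                + Complex.I * ((Real.sqrt (β₁ + β₄) * r : ℝ) : ℂ)))‖
            ≤ M * r ^ 3) ∧
        (∃ M : ℝ, ∃ δ : ℝ, 0 < δ ∧ ∀ r : ℝ, 0 < r → r ≤ δ →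
          ‖(l₃ r
              - ((((-(β₁ * νm + β₄ * νp)
                    + Real.sqrt ((β₁ * νm + β₄ * νp) ^ 2
                        - 4 * (β₁ + β₄) * (β₁ * σm + β₄ * σp)))
                  / (2 * (β₁ + β₄)) * r ^ 2 : ℝ)) : ℂ))‖
            ≤ M * r ^ 4) ∧
        (∃ M : ℝ, ∃ δ : ℝ, 0 < δ ∧ ∀ r : ℝ, 0 < r → r ≤ δ →
          ‖(l₄ r
              - ((((-(β₁ * νm + β₄ * νp)
                    - Real.sqrt ((β₁ * νm + β₄ * νp) ^ 2
                        - 4 * (β₁ + β₄) * (β₁ * σm + β₄ * σp)))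
                  / (2 * (β₁ + β₄)) * r ^ 2 : ℝ)) : ℂ))‖
            ≤ M * r ^ 4) :=
  stmt_15_general β₁ β₄ νp νm σp σm hβ₁ hβ₄ hD
end

section
/- Let β₁, β₄, ν⁺, ν⁻, σ⁺, σ⁻ > 0 and let 0 < η₁ ≤ K < ∞. For r > 0 define the quartic polynomial p_r(λ) = λ⁴ + (ν⁺+ν⁻)r² λ³ + [(β₁+β₄)r² + (σ⁺+σ⁻+ν⁺ν⁻)r⁴] λ² + [(β₁ν⁻+β₄ν⁺)r⁴ + (ν⁺σ⁻+ν⁻σ⁺)r⁶] λ + (β₁σ⁻+β₄σ⁺)r⁶ + σ⁺σ⁻ r⁸. Then there exists b > 0 such that for every r ∈ [η₁, K] and every λ ∈ ℂ with p_r(λ) = 0 one has Re λ ≤ −b. -/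
/-- Any root of a monic quartic with positive coefficients satisfying the
Routh–Hurwitz condition `a*b*c - c² - a²*d > 0` has negative real part. -/
lemma quartic_stable (a b c d : ℝ) (ha : 0 < a) (hb : 0 < b) (hc : 0 < c) (hd : 0 < d)
    (hH : 0 < a * b * c - c * c - a * a * d) (z : ℂ)
    (hz : z ^ 4 + (a:ℂ) * z ^ 3 + (b:ℂ) * z ^ 2 + (c:ℂ) * z + (d:ℂ) = 0) :
    z.re < 0 := by
  set x := z.re with hx
  set y := z.im with hy
  have h1 := congrArg Complex.re hz
  have h2 := congrArg Complex.im hz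
  simp only [Complex.add_re, Complex.add_im, Complex.mul_re, Complex.mul_im,
    Complex.ofReal_re, Complex.ofReal_im, Complex.zero_re, Complex.zero_im,
    pow_succ, pow_zero, one_mul] at h1 h2
  have hre : x ^ 4 - 6 * x ^ 2 * y ^ 2 + y ^ 4 + a * (x ^ 3 - 3 * x * y ^ 2)
      + b * (x ^ 2 - y ^ 2) + c * x + d = 0 := by linear_combination h1
  have him : y * (4 * x ^ 3 - 4 * x * y ^ 2 + a * (3 * x ^ 2 - y ^ 2) + 2 * b * x + c) = 0 := by
    linear_combination h2
  by_contra hcon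
  push_neg at hcon
  rcases mul_eq_zero.mp him with hy0 | hfac
  · rw [hy0] at hre
    nlinarith [pow_nonneg hcon 4, mul_nonneg ha.le (pow_nonneg hcon 3),
      mul_nonneg hb.le (pow_nonneg hcon 2), mul_nonneg hc.le hcon]
  · have heqU : (4 * x + a) * y ^ 2 = 4 * x ^ 3 + 3 * a * x ^ 2 + 2 * b * x + c := by
      linear_combination -hfac
    set U : ℝ := 4 * x ^ 3 + 3 * a * x ^ 2 + 2 * b * x + c with hU
    set V : ℝ := 6 * x ^ 2 + 3 * a * x + b with hV
    set W : ℝ := 4 * x + a with hW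
    set P : ℝ := x ^ 4 + a * x ^ 3 + b * x ^ 2 + c * x + d with hP
    have hR : U ^ 2 - V * W * U + W ^ 2 * P = 0 := by
      have e1 : U ^ 2 - V * W * U + W ^ 2 * P
          = W ^ 2 * (y ^ 4 - V * y ^ 2 + P) + (U - W * y ^ 2) * (U + W * y ^ 2 - V * W) := by
        ring
      rw [e1]
      have e2 : y ^ 4 - V * y ^ 2 + P = 0 := by rw [hV, hP]; linear_combination hre
      have e3 : U - W * y ^ 2 = 0 := by rw [hU, hW]; linear_combination -heqU
      rw [e2, e3]; ring
    have hid : -(a ^ 2 * (U ^ 2 - V * W * U + W ^ 2 * P))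
        = 64 * a ^ 2 * x ^ 6 + 96 * a ^ 3 * x ^ 5 + (32 * a ^ 2 * b + 48 * a ^ 4) * x ^ 4
          + (32 * a ^ 3 * b + 8 * a ^ 5) * x ^ 3
          + ((2 * a * b - 4 * c) ^ 2 + 4 * a ^ 3 * c + 8 * a ^ 4 * b) * x ^ 2
          + (2 * a * (a * b - 2 * c) ^ 2 + 2 * a ^ 4 * c) * x
          + (a * b * c - c * c - a * a * d) * (a + 4 * x) ^ 2 := by
      rw [hU, hV, hW, hP]; ring
    rw [hR] at hid
    have t1 : 0 ≤ 64 * a ^ 2 * x ^ 6 := by positivity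
    have t2 : 0 ≤ 96 * a ^ 3 * x ^ 5 := by
      have h5 := pow_nonneg hcon 5
      have : (0:ℝ) ≤ 96 * a ^ 3 := by positivity
      exact mul_nonneg this h5
    have t3 : 0 ≤ (32 * a ^ 2 * b + 48 * a ^ 4) * x ^ 4 := by positivity
    have t4 : 0 ≤ (32 * a ^ 3 * b + 8 * a ^ 5) * x ^ 3 := by
      have h3 := pow_nonneg hcon 3
      have : (0:ℝ) ≤ 32 * a ^ 3 * b + 8 * a ^ 5 := by positivity
      exact mul_nonneg this h3
    have t5 : 0 ≤ ((2 * a * b - 4 * c) ^ 2 + 4 * a ^ 3 * c + 8 * a ^ 4 * b) * x ^ 2 := by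
      positivity
    have t6 : 0 ≤ (2 * a * (a * b - 2 * c) ^ 2 + 2 * a ^ 4 * c) * x := by
      apply mul_nonneg _ hcon; positivity
    have t7 : 0 < (a * b * c - c * c - a * a * d) * (a + 4 * x) ^ 2 := by
      apply mul_pos hH
      have : 0 < a + 4 * x := by linarith
      positivity
    linarith

/-- Norm bound for roots of a monic quartic with nonnegative coefficients. -/
lemma quartic_root_bound (a b c d M : ℝ) (ha : 0 ≤ a) (hb : 0 ≤ b) (hc : 0 ≤ c) (hd : 0 ≤ d)
    (hM : 1 + a + b + c + d ≤ M) (z : ℂ)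
    (hz : z ^ 4 + (a:ℂ) * z ^ 3 + (b:ℂ) * z ^ 2 + (c:ℂ) * z + (d:ℂ) = 0) :
    ‖z‖ ≤ M := by
  by_cases h1 : ‖z‖ ≤ 1
  · nlinarith
  · push_neg at h1
    have hz4 : z ^ 4 = -((a:ℂ) * z ^ 3 + (b:ℂ) * z ^ 2 + (c:ℂ) * z + (d:ℂ)) := by
      linear_combination hz
    have hn : ‖z‖ ^ 4 ≤ a * ‖z‖ ^ 3 + b * ‖z‖ ^ 2 + c * ‖z‖ + d := by
      calc ‖z‖ ^ 4 = ‖z ^ 4‖ := (norm_pow z 4).symm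
        _ = ‖(a:ℂ) * z ^ 3 + (b:ℂ) * z ^ 2 + (c:ℂ) * z + (d:ℂ)‖ := by rw [hz4, norm_neg]
        _ ≤ ‖(a:ℂ) * z ^ 3 + (b:ℂ) * z ^ 2 + (c:ℂ) * z‖ + ‖(d:ℂ)‖ := norm_add_le _ _
        _ ≤ (‖(a:ℂ) * z ^ 3 + (b:ℂ) * z ^ 2‖ + ‖(c:ℂ) * z‖) + ‖(d:ℂ)‖ := by
              gcongr; exact norm_add_le _ _
        _ ≤ ((‖(a:ℂ) * z ^ 3‖ + ‖(b:ℂ) * z ^ 2‖) + ‖(c:ℂ) * z‖) + ‖(d:ℂ)‖ := by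
              gcongr; exact norm_add_le _ _
        _ = a * ‖z‖ ^ 3 + b * ‖z‖ ^ 2 + c * ‖z‖ + d := by
              simp [norm_mul, norm_pow, Complex.norm_real,
                abs_of_nonneg ha, abs_of_nonneg hb, abs_of_nonneg hc, abs_of_nonneg hd]
    have h2 : ‖z‖ ^ 2 ≤ ‖z‖ ^ 3 := by nlinarith
    have h3 : ‖z‖ ≤ ‖z‖ ^ 3 := by nlinarith
    have h4 : (1:ℝ) ≤ ‖z‖ ^ 3 := by nlinarith
    have h5 : ‖z‖ ^ 4 ≤ (a + b + c + d) * ‖z‖ ^ 3 := by nlinarith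
    have h6 : ‖z‖ ^ 4 = ‖z‖ * ‖z‖ ^ 3 := by ring
    nlinarith

/-- Lemma 2.3: middle-frequency spectral gap for the characteristic quartic
of the compressible part of the linearized two-fluid system. -/
theorem stmt_16 (β₁ β₄ νp νm σp σm η₁ K : ℝ)
    (hβ₁ : 0 < β₁) (hβ₄ : 0 < β₄) (hνp : 0 < νp) (hνm : 0 < νm)
    (hσp : 0 < σp) (hσm : 0 < σm) (hη₁ : 0 < η₁) (hηK : η₁ ≤ K) :
    ∃ b : ℝ, 0 < b ∧ ∀ r : ℝ, η₁ ≤ r → r ≤ K → ∀ z : ℂ,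
      z ^ 4 + (((νp + νm) * r ^ 2 : ℝ) : ℂ) * z ^ 3
          + ((((β₁ + β₄) * r ^ 2 + (σp + σm + νp * νm) * r ^ 4 : ℝ)) : ℂ) * z ^ 2
          + ((((β₁ * νm + β₄ * νp) * r ^ 4 + (νp * σm + νm * σp) * r ^ 6 : ℝ)) : ℂ) * z
          + (((β₁ * σm + β₄ * σp) * r ^ 6 + σp * σm * r ^ 8 : ℝ) : ℂ) = 0 →
        z.re ≤ -b := by
  have hK : 0 < K := lt_of_lt_of_le hη₁ hηK
  set M : ℝ := 1 + (νp + νm) * K ^ 2 + ((β₁ + β₄) * K ^ 2 + (σp + σm + νp * νm) * K ^ 4)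
      + ((β₁ * νm + β₄ * νp) * K ^ 4 + (νp * σm + νm * σp) * K ^ 6)
      + ((β₁ * σm + β₄ * σp) * K ^ 6 + σp * σm * K ^ 8) with hM
  set F : ℝ × ℂ → ℂ := fun p =>
      p.2 ^ 4 + (((νp + νm) * p.1 ^ 2 : ℝ) : ℂ) * p.2 ^ 3
          + ((((β₁ + β₄) * p.1 ^ 2 + (σp + σm + νp * νm) * p.1 ^ 4 : ℝ)) : ℂ) * p.2 ^ 2
          + ((((β₁ * νm + β₄ * νp) * p.1 ^ 4 + (νp * σm + νm * σp) * p.1 ^ 6 : ℝ)) : ℂ) * p.2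
          + (((β₁ * σm + β₄ * σp) * p.1 ^ 6 + σp * σm * p.1 ^ 8 : ℝ) : ℂ) with hF
  have hFcont : Continuous F := by fun_prop
  -- pointwise stability
  have hstable : ∀ r : ℝ, η₁ ≤ r → ∀ z : ℂ, F (r, z) = 0 → z.re < 0 := by
    intro r hr z hzeq
    have hr0 : 0 < r := lt_of_lt_of_le hη₁ hr
    have hr2 := pow_pos hr0 2
    have hr4 := pow_pos hr0 4
    have hr6 := pow_pos hr0 6
    have hr8 := pow_pos hr0 8
    refine quartic_stable ((νp + νm) * r ^ 2)
      ((β₁ + β₄) * r ^ 2 + (σp + σm + νp * νm) * r ^ 4)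
      ((β₁ * νm + β₄ * νp) * r ^ 4 + (νp * σm + νm * σp) * r ^ 6)
      ((β₁ * σm + β₄ * σp) * r ^ 6 + σp * σm * r ^ 8)
      (mul_pos (by linarith) hr2)
      (add_pos (mul_pos (by linarith) hr2) (mul_pos (by nlinarith) hr4))
      (add_pos (mul_pos (by nlinarith) hr4) (mul_pos (by nlinarith) hr6))
      (add_pos (mul_pos (by nlinarith) hr6) (mul_pos (by nlinarith) hr8))
      ?_ z hzeq
    have hid : ((νp + νm) * r ^ 2) * ((β₁ + β₄) * r ^ 2 + (σp + σm + νp * νm) * r ^ 4)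
          * ((β₁ * νm + β₄ * νp) * r ^ 4 + (νp * σm + νm * σp) * r ^ 6)
        - ((β₁ * νm + β₄ * νp) * r ^ 4 + (νp * σm + νm * σp) * r ^ 6)
          * ((β₁ * νm + β₄ * νp) * r ^ 4 + (νp * σm + νm * σp) * r ^ 6)
        - ((νp + νm) * r ^ 2) * ((νp + νm) * r ^ 2)
          * ((β₁ * σm + β₄ * σp) * r ^ 6 + σp * σm * r ^ 8)
        = r ^ 8 * (νp * νm * ((σm - σp) * r ^ 2 + β₄ - β₁) ^ 2 + β₁ * β₄ * (νp + νm) ^ 2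
            + r ^ 4 * (νp * νm * (νm ^ 2 * σp + νp * νm * (σm + σp) + νp ^ 2 * σm))
            + r ^ 2 * (νp * νm * (νp + νm) * (β₄ * νp + β₁ * νm))) := by ring
    rw [hid]
    have hE : 0 < νp * νm * ((σm - σp) * r ^ 2 + β₄ - β₁) ^ 2 + β₁ * β₄ * (νp + νm) ^ 2
            + r ^ 4 * (νp * νm * (νm ^ 2 * σp + νp * νm * (σm + σp) + νp ^ 2 * σm))
            + r ^ 2 * (νp * νm * (νp + νm) * (β₄ * νp + β₁ * νm)) := by positivity
    exact mul_pos hr8 hE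
  -- uniform root bound
  have hbound : ∀ r : ℝ, η₁ ≤ r → r ≤ K → ∀ z : ℂ, F (r, z) = 0 → ‖z‖ ≤ M := by
    intro r hr hrK z hzeq
    have hr0 : 0 < r := lt_of_lt_of_le hη₁ hr
    refine quartic_root_bound ((νp + νm) * r ^ 2)
      ((β₁ + β₄) * r ^ 2 + (σp + σm + νp * νm) * r ^ 4)
      ((β₁ * νm + β₄ * νp) * r ^ 4 + (νp * σm + νm * σp) * r ^ 6)
      ((β₁ * σm + β₄ * σp) * r ^ 6 + σp * σm * r ^ 8) M
      (by positivity) (by positivity) (by positivity) (by positivity) ?_ z hzeq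
    rw [hM]
    gcongr
  -- compactness
  set S : Set (ℝ × ℂ) := (Set.Icc η₁ K ×ˢ Metric.closedBall (0:ℂ) M) ∩ F ⁻¹' {0} with hS
  have hScompact : IsCompact S :=
    (isCompact_Icc.prod (isCompact_closedBall _ _)).inter_right
      (isClosed_singleton.preimage hFcont)
  by_cases hne : S.Nonempty
  · obtain ⟨p₀, hp₀, hmax⟩ := hScompact.exists_isMaxOn hne
      ((Complex.continuous_re.comp continuous_snd).continuousOn)
    have hp₀mem : p₀.1 ∈ Set.Icc η₁ K ∧ p₀.2 ∈ Metric.closedBall (0:ℂ) M := hp₀.1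
    have hp₀root : F p₀ = 0 := hp₀.2
    have hp₀neg : p₀.2.re < 0 := by
      have := hstable p₀.1 hp₀mem.1.1 p₀.2 (by rw [← hp₀root])
      exact this
    refine ⟨-p₀.2.re, by linarith, ?_⟩
    intro r hr1 hr2 z hzeq
    have hzS : (r, z) ∈ S := by
      refine ⟨⟨⟨hr1, hr2⟩, ?_⟩, hzeq⟩
      simpa [Metric.mem_closedBall] using hbound r hr1 hr2 z hzeq
    have := hmax hzS
    simpa using this
  · refine ⟨1, one_pos, ?_⟩
    intro r hr1 hr2 z hzeq
    exact absurd ⟨(r, z), ⟨⟨⟨hr1, hr2⟩, by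
      simpa [Metric.mem_closedBall] using hbound r hr1 hr2 z hzeq⟩, hzeq⟩⟩ hne
end

section
/- Let A⁺, A⁻ > 0 and γ⁺, γ⁻ > 1, and define the pressure laws P⁺(s) = A⁺ s^{γ⁺} and P⁻(s) = A⁻ s^{γ⁻} for s > 0. Then for any R⁺ > 0 and R⁻ > 0 there exists a unique ρ⁺ > R⁺ such that P⁺(ρ⁺) = P⁻( R⁻ ρ⁺ / (ρ⁺ − R⁺) ). -/
/-!
On `(R⁺, ∞)` the map `ρ ↦ R⁻ρ/(ρ − R⁺)` decreases strictly from `+∞` to `R⁻`, so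
`φ(ρ) = P⁺(ρ) − P⁻(R⁻ρ/(ρ − R⁺))` is continuous and strictly increasing there, tends to `−∞`
as `ρ → R⁺` (where `P⁺` stays bounded) and to `+∞` as `ρ → ∞` (where `P⁻` stays bounded).
By the intermediate value theorem it has exactly one zero.
-/

open Filter Topology Set

theorem existsUnique_mem_Ioi_eq_zero {f : ℝ → ℝ} {a : ℝ} (hcont : ContinuousOn f (Ioi a))
    (hmono : StrictMonoOn f (Ioi a)) (hbot : Tendsto f (𝓝[>] a) atBot)
    (htop : Tendsto f atTop atTop) : ∃! x, a < x ∧ f x = 0 := by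
  obtain ⟨x, hfx, hx⟩ :=
    ((hbot.eventually (eventually_le_atBot 0)).and self_mem_nhdsWithin).exists
  obtain ⟨y, hfy, hy⟩ :=
    ((htop.eventually (eventually_ge_atTop 0)).and (eventually_gt_atTop a)).exists
  have hsub : uIcc x y ⊆ Ioi a := ordConnected_Ioi.uIcc_subset hx hy
  obtain ⟨z, hz, hfz⟩ :=
    intermediate_value_uIcc (hcont.mono hsub) (mem_uIcc_of_le hfx hfy)
  exact ⟨z, ⟨hsub hz, hfz⟩, fun w ⟨hw, hfw⟩ => hmono.injOn hw (hsub hz) (hfw.trans hfz.symm)⟩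

/-- Given the fraction densities `Rp = α⁺ ρ⁺` and `Rm = α⁻ ρ⁻`, the volume constraint
`α⁺ + α⁻ = 1` determines `ρ⁻` from `ρ⁺`. -/
noncomputable def conjugateDensity (Rp Rm ρ : ℝ) : ℝ := Rm * ρ / (ρ - Rp)

section conjugateDensity

variable {Rp Rm : ℝ}

theorem conjugateDensity_eq_add_div {ρ : ℝ} (hρ : Rp < ρ) :
    conjugateDensity Rp Rm ρ = Rm + Rm * Rp / (ρ - Rp) := by
  have : ρ - Rp ≠ 0 := (sub_pos.2 hρ).ne'
  rw [conjugateDensity]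
  field_simp
  ring

theorem conjugateDensity_pos (hRp : 0 < Rp) (hRm : 0 < Rm) {ρ : ℝ} (hρ : Rp < ρ) :
    0 < conjugateDensity Rp Rm ρ :=
  div_pos (mul_pos hRm (hRp.trans hρ)) (sub_pos.2 hρ)

theorem continuousOn_conjugateDensity : ContinuousOn (conjugateDensity Rp Rm) (Ioi Rp) :=
  (continuousOn_const.mul continuousOn_id).div (continuousOn_id.sub continuousOn_const)
    fun _ hρ => (sub_pos.2 hρ).ne'

theorem strictAntiOn_conjugateDensity (hRp : 0 < Rp) (hRm : 0 < Rm) :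
    StrictAntiOn (conjugateDensity Rp Rm) (Ioi Rp) := by
  intro x hx y hy hxy
  rw [conjugateDensity_eq_add_div hx, conjugateDensity_eq_add_div hy, add_lt_add_iff_left]
  exact div_lt_div_of_pos_left (mul_pos hRm hRp) (sub_pos.2 hx) (sub_lt_sub_right hxy _)

theorem tendsto_conjugateDensity_nhdsGT (hRp : 0 < Rp) (hRm : 0 < Rm) :
    Tendsto (conjugateDensity Rp Rm) (𝓝[>] Rp) atTop := by
  have hsub : Tendsto (· - Rp) (𝓝[>] Rp) (𝓝[>] 0) := by
    rw [Tendsto, Filter.map_subRight_nhdsGT, sub_self]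
  have hdecomp := (tendsto_atTop_add_const_left _ Rm
    (hsub.inv_tendsto_nhdsGT_zero.const_mul_atTop (mul_pos hRm hRp)))
  refine hdecomp.congr' (eventually_nhdsWithin_of_forall fun ρ hρ => ?_)
  rw [conjugateDensity_eq_add_div hρ, div_eq_mul_inv]
  rfl

theorem tendsto_conjugateDensity_atTop :
    Tendsto (conjugateDensity Rp Rm) atTop (𝓝 Rm) := by
  have hdecomp : Tendsto (fun ρ => Rm + Rm * Rp / (ρ - Rp)) atTop (𝓝 (Rm + 0)) :=
    tendsto_const_nhds.add
      (tendsto_const_nhds.div_atTop (tendsto_atTop_add_const_right _ _ tendsto_id))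
  rw [add_zero] at hdecomp
  exact hdecomp.congr'
    ((eventually_gt_atTop Rp).mono fun ρ hρ => (conjugateDensity_eq_add_div hρ).symm)

end conjugateDensity

structure IsPressureLaw (P : ℝ → ℝ) : Prop where
  continuousOn : ContinuousOn P (Ioi 0)
  strictMonoOn : StrictMonoOn P (Ioi 0)
  tendsto_atTop : Tendsto P atTop atTop

theorem IsPressureLaw.of_eqOn_rpow {P : ℝ → ℝ} {A γ : ℝ} (hA : 0 < A) (hγ : 0 < γ)
    (hP : ∀ s, 0 < s → P s = A * s ^ γ) : IsPressureLaw P where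
  continuousOn :=
    (continuous_const.mul (Real.continuous_rpow_const hγ.le)).continuousOn.congr fun s hs => hP s hs
  strictMonoOn :=
    ((strictMono_mul_left_of_pos hA).comp_strictMonoOn
      ((Real.strictMonoOn_rpow_Ici_of_exponent_pos hγ).mono Ioi_subset_Ici_self)).congr
      fun s hs => (hP s hs).symm
  tendsto_atTop :=
    ((tendsto_rpow_atTop hγ).const_mul_atTop hA).congr'
      ((eventually_gt_atTop 0).mono fun s hs => (hP s hs).symm)

/-- The function `φ(ρ⁺, R⁺, R⁻)` of the paper. -/
noncomputable def pressureGap (Pp Pm : ℝ → ℝ) (Rp Rm ρ : ℝ) : ℝ :=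
  Pp ρ - Pm (conjugateDensity Rp Rm ρ)

section pressureGap

variable {Pp Pm : ℝ → ℝ} {Rp Rm : ℝ}

theorem continuousOn_pressureGap (hPp : IsPressureLaw Pp) (hPm : IsPressureLaw Pm)
    (hRp : 0 < Rp) (hRm : 0 < Rm) : ContinuousOn (pressureGap Pp Pm Rp Rm) (Ioi Rp) :=
  (hPp.continuousOn.mono (Ioi_subset_Ioi hRp.le)).sub
    (hPm.continuousOn.comp continuousOn_conjugateDensity fun _ => conjugateDensity_pos hRp hRm)

theorem strictMonoOn_pressureGap (hPp : IsPressureLaw Pp) (hPm : IsPressureLaw Pm)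
    (hRp : 0 < Rp) (hRm : 0 < Rm) : StrictMonoOn (pressureGap Pp Pm Rp Rm) (Ioi Rp) :=
  fun _ hx _ hy hxy => sub_lt_sub
    (hPp.strictMonoOn (hRp.trans hx) (hRp.trans hy) hxy)
    (hPm.strictMonoOn (conjugateDensity_pos hRp hRm hy) (conjugateDensity_pos hRp hRm hx)
      (strictAntiOn_conjugateDensity hRp hRm hx hy hxy))

theorem tendsto_pressureGap_nhdsGT (hPp : IsPressureLaw Pp) (hPm : IsPressureLaw Pm)
    (hRp : 0 < Rp) (hRm : 0 < Rm) : Tendsto (pressureGap Pp Pm Rp Rm) (𝓝[>] Rp) atBot := by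
  have hPp_Rp := tendsto_nhdsWithin_of_tendsto_nhds (s := Ioi Rp)
    (hPp.continuousOn.continuousAt (Ioi_mem_nhds hRp)).tendsto
  have hPm_top := hPm.tendsto_atTop.comp (tendsto_conjugateDensity_nhdsGT hRp hRm)
  exact (hPp_Rp.add_atBot (tendsto_neg_atTop_atBot.comp hPm_top)).congr
    fun _ => (sub_eq_add_neg _ _).symm

theorem tendsto_pressureGap_atTop (hPp : IsPressureLaw Pp) (hPm : IsPressureLaw Pm)
    (hRm : 0 < Rm) : Tendsto (pressureGap Pp Pm Rp Rm) atTop atTop := by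
  have hPm_Rm := (hPm.continuousOn.continuousAt (Ioi_mem_nhds hRm)).tendsto.comp
    (tendsto_conjugateDensity_atTop (Rp := Rp))
  exact (hPp.tendsto_atTop.atTop_add hPm_Rm.neg).congr fun _ => (sub_eq_add_neg _ _).symm

theorem existsUnique_eq_conjugateDensity (hPp : IsPressureLaw Pp) (hPm : IsPressureLaw Pm)
    (hRp : 0 < Rp) (hRm : 0 < Rm) : ∃! ρ, Rp < ρ ∧ Pp ρ = Pm (conjugateDensity Rp Rm ρ) := by
  simpa only [pressureGap, sub_eq_zero] using existsUnique_mem_Ioi_eq_zero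
    (continuousOn_pressureGap hPp hPm hRp hRm) (strictMonoOn_pressureGap hPp hPm hRp hRm)
    (tendsto_pressureGap_nhdsGT hPp hPm hRp hRm) (tendsto_pressureGap_atTop hPp hPm hRm)

end pressureGap

/-- Solvability of the equal-pressure constraint: for any fraction densities
R⁺, R⁻ > 0 there is a unique ρ⁺ > R⁺ with P⁺(ρ⁺) = P⁻(R⁻ρ⁺/(ρ⁺ − R⁺)). -/
theorem stmt_17 (Ap Am γp γm : ℝ) (hAp : 0 < Ap) (hAm : 0 < Am)
    (hγp : 1 < γp) (hγm : 1 < γm)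
    (Pp Pm : ℝ → ℝ) (hPp : ∀ s : ℝ, 0 < s → Pp s = Ap * s ^ γp)
    (hPm : ∀ s : ℝ, 0 < s → Pm s = Am * s ^ γm) :
    ∀ Rp Rm : ℝ, 0 < Rp → 0 < Rm →
      ∃! ρ : ℝ, ρ > Rp ∧ Pp ρ = Pm (Rm * ρ / (ρ - Rp)) :=
  fun _ _ hRp hRm => existsUnique_eq_conjugateDensity
    (.of_eqOn_rpow hAp (zero_lt_one.trans hγp) hPp) (.of_eqOn_rpow hAm (zero_lt_one.trans hγm) hPm)
    hRp hRm
end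

section
/- Let c > 0. There exists a constant C > 0 (depending on c) such that for all t ≥ 0 and all x ∈ ℝ³, ∫₀^{t/2} ∫_{ℝ³} (1 + t − τ)^{−1} (1 + |x−y|²/(1+t−τ))^{−1} (1 + τ)^{−7/2} (1 + (|y| − c τ)²/(1+τ))^{−2} dy dτ ≤ C (1+t)^{−1} log(2+t). -/
/-!
Since `τ ≤ t / 2`, the Riesz factor is at most `2 (1 + t)⁻¹` uniformly in `y`, so the space
integral reduces to the `L¹` mass of the Huygens profile with `σ = 1 + τ` and `a = c τ`. In polar
coordinates that mass is `3 |B₁| ∫₀^∞ r² (1 + (r - a)² / σ)⁻² dr`, and `r² ≤ 2 (σ + a²) (1 + (r - a)² / σ)`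
turns this into a Cauchy integral, so the mass is `O((σ + a²) √σ) = O((1 + c²) (1 + τ)^{5/2})`.
Against the weight `(1 + τ)^{-7/2}` only `(1 + τ)⁻¹` survives, whose integral over `[0, t / 2]` is
the logarithm.
-/

open MeasureTheory Real Set Metric Module

lemma sq_mul_one_add_sub_sq_div_rpow_neg_two_le {σ : ℝ} (hσ : 0 < σ) (a r : ℝ) :
    r ^ 2 * (1 + (r - a) ^ 2 / σ) ^ (-2 : ℝ) ≤ 2 * (σ + a ^ 2) * (1 + (r - a) ^ 2 / σ)⁻¹ := by
  set q := (r - a) ^ 2 / σ with hq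
  have hq0 : 0 ≤ q := by positivity
  have hσq : σ * q = (r - a) ^ 2 := by rw [hq]; field_simp
  have hr : r ^ 2 ≤ 2 * (σ + a ^ 2) * (1 + q) := by
    nlinarith [sq_nonneg (r - 2 * a), sq_nonneg a, mul_nonneg (sq_nonneg a) hq0]
  rw [show (-2 : ℝ) = ((-2 : ℤ) : ℝ) by norm_num, rpow_intCast, zpow_neg, zpow_two,
    ← div_eq_mul_inv, ← div_eq_mul_inv, div_le_div_iff₀ (by positivity) (by positivity)]
  nlinarith [mul_le_mul_of_nonneg_right hr (by positivity : (0 : ℝ) ≤ 1 + q)]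

lemma integrable_inv_one_add_sub_sq_div {σ : ℝ} (hσ : 0 < σ) (a : ℝ) :
    Integrable fun r : ℝ ↦ (1 + (r - a) ^ 2 / σ)⁻¹ := by
  have h := (integrable_inv_one_add_sq.comp_div (sqrt_pos.2 hσ).ne').comp_sub_right a
  refine h.congr (Filter.Eventually.of_forall fun r ↦ ?_)
  simp [div_pow, sq_sqrt hσ.le]

lemma integral_inv_one_add_sub_sq_div {σ : ℝ} (hσ : 0 < σ) (a : ℝ) :
    ∫ r : ℝ, (1 + (r - a) ^ 2 / σ)⁻¹ = π * √σ := by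
  have h : ∀ r : ℝ, (1 + (r - a) ^ 2 / σ)⁻¹ = (1 + ((r - a) / √σ) ^ 2)⁻¹ := fun r ↦ by
    rw [div_pow, sq_sqrt hσ.le]
  simp_rw [h]
  rw [integral_sub_right_eq_self (fun r ↦ (1 + (r / √σ) ^ 2)⁻¹) a,
    Measure.integral_comp_div (fun r ↦ (1 + r ^ 2)⁻¹), integral_univ_inv_one_add_sq,
    abs_of_pos (sqrt_pos.2 hσ), smul_eq_mul, mul_comm]

lemma rpow_neg_one_mul_one_add_div_rpow_neg_one_le {t τ : ℝ} (hτ : 0 ≤ τ) (hτt : τ ≤ t / 2)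
    {s : ℝ} (hs : 0 ≤ s) :
    (1 + t - τ) ^ (-1 : ℝ) * (1 + s / (1 + t - τ)) ^ (-1 : ℝ) ≤ 2 * (1 + t) ^ (-1 : ℝ) := by
  have hσ : (1 + t) / 2 ≤ 1 + t - τ := by linarith
  have hσ0 : 0 < 1 + t - τ := by linarith
  rw [rpow_neg_one, rpow_neg_one, rpow_neg_one, ← div_eq_mul_inv]
  calc (1 + t - τ)⁻¹ * (1 + s / (1 + t - τ))⁻¹ ≤ (1 + t - τ)⁻¹ * 1 := by
        gcongr
        exact inv_le_one_of_one_le₀ (le_add_of_nonneg_right (by positivity))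
    _ ≤ ((1 + t) / 2)⁻¹ := by rw [mul_one]; gcongr; linarith
    _ = 2 / (1 + t) := by rw [inv_div]

lemma one_add_rpow_neg_seven_halves_mul_le {τ : ℝ} (hτ : 0 ≤ τ) (c : ℝ) :
    (1 + τ) ^ (-(7 / 2) : ℝ) * (((1 + τ) + (c * τ) ^ 2) * √(1 + τ))
      ≤ (1 + c ^ 2) * (1 + τ)⁻¹ := by
  have hτ1 : 0 < 1 + τ := by linarith
  have hpow : (1 + τ) ^ (-(7 / 2) : ℝ) * ((1 + τ) ^ 2 * √(1 + τ)) = (1 + τ)⁻¹ := by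
    rw [sqrt_eq_rpow, ← rpow_natCast, ← rpow_add hτ1, ← rpow_add hτ1, ← rpow_neg_one]
    norm_num
  calc (1 + τ) ^ (-(7 / 2) : ℝ) * (((1 + τ) + (c * τ) ^ 2) * √(1 + τ))
      ≤ (1 + τ) ^ (-(7 / 2) : ℝ) * (((1 + c ^ 2) * (1 + τ) ^ 2) * √(1 + τ)) := by
        gcongr
        nlinarith [sq_nonneg c, mul_nonneg (sq_nonneg c) hτ]
    _ = (1 + c ^ 2) * (1 + τ)⁻¹ := by rw [← hpow]; ring

lemma integral_Icc_inv_one_add {T : ℝ} (hT : 0 ≤ T) :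
    ∫ τ in Icc 0 T, (1 + τ)⁻¹ = log (1 + T) := by
  have h0 : (0 : ℝ) ∉ uIcc 1 (1 + T) := by
    rw [uIcc_of_le (by linarith)]
    exact fun h ↦ by linarith [h.1]
  rw [integral_Icc_eq_integral_Ioc, ← intervalIntegral.integral_of_le hT,
    intervalIntegral.integral_comp_add_left (fun τ ↦ τ⁻¹), add_zero, integral_inv h0, div_one]

section ThreeDimensional

variable {E : Type*} [NormedAddCommGroup E] [NormedSpace ℝ E] [FiniteDimensional ℝ E]
  [MeasurableSpace E] [BorelSpace E] (μ : Measure E) [μ.IsAddHaarMeasure]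

lemma integrable_one_add_norm_sub_sq_div_rpow_neg_two (hE : finrank ℝ E = 3) {σ : ℝ}
    (hσ : 0 < σ) (a : ℝ) :
    Integrable (fun y : E ↦ (1 + (‖y‖ - a) ^ 2 / σ) ^ (-2 : ℝ)) μ := by
  have : Nontrivial E := Module.nontrivial_of_finrank_eq_succ hE
  rw [integrable_fun_norm_addHaar μ (f := fun r ↦ (1 + (r - a) ^ 2 / σ) ^ (-2 : ℝ)), hE]
  refine ((integrable_inv_one_add_sub_sq_div hσ a).const_mul (2 * (σ + a ^ 2))).integrableOn.mono'
    (by fun_prop) (Filter.Eventually.of_forall fun r ↦ ?_)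
  simp only [Nat.reduceSub, smul_eq_mul]
  rw [norm_of_nonneg (by positivity)]
  exact sq_mul_one_add_sub_sq_div_rpow_neg_two_le hσ a r

lemma integral_one_add_norm_sub_sq_div_rpow_neg_two_le (hE : finrank ℝ E = 3) {σ : ℝ}
    (hσ : 0 < σ) (a : ℝ) :
    ∫ y : E, (1 + (‖y‖ - a) ^ 2 / σ) ^ (-2 : ℝ) ∂μ
      ≤ 6 * π * μ.real (ball 0 1) * ((σ + a ^ 2) * √σ) := by
  have : Nontrivial E := Module.nontrivial_of_finrank_eq_succ hE
  have hmaj := (integrable_inv_one_add_sub_sq_div hσ a).const_mul (2 * (σ + a ^ 2))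
  have hradial : ∫ r in Ioi (0 : ℝ), r ^ 2 * (1 + (r - a) ^ 2 / σ) ^ (-2 : ℝ)
      ≤ 2 * (σ + a ^ 2) * (π * √σ) :=
    calc _ ≤ ∫ r in Ioi (0 : ℝ), 2 * (σ + a ^ 2) * (1 + (r - a) ^ 2 / σ)⁻¹ :=
          setIntegral_mono_of_nonneg (fun r _ ↦ by positivity)
            (fun r _ ↦ sq_mul_one_add_sub_sq_div_rpow_neg_two_le hσ a r) hmaj.integrableOn
      _ ≤ ∫ r, 2 * (σ + a ^ 2) * (1 + (r - a) ^ 2 / σ)⁻¹ :=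
          setIntegral_le_integral hmaj (Filter.Eventually.of_forall fun r ↦ by positivity)
      _ = _ := by rw [integral_const_mul, integral_inv_one_add_sub_sq_div hσ a]
  rw [integral_fun_norm_addHaar μ (fun r ↦ (1 + (r - a) ^ 2 / σ) ^ (-2 : ℝ)), hE]
  simp only [Nat.reduceSub, nsmul_eq_mul, smul_eq_mul, Nat.cast_ofNat]
  calc _ ≤ 3 * (μ.real (ball 0 1) * (2 * (σ + a ^ 2) * (π * √σ))) := by gcongr
    _ = _ := by ring

lemma integral_riesz_mul_huygens_le (hE : finrank ℝ E = 3) (c : ℝ) {t τ : ℝ} (hτ : 0 ≤ τ)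
    (hτt : τ ≤ t / 2) (x : E) :
    ∫ y, (1 + t - τ) ^ (-1 : ℝ) * (1 + ‖x - y‖ ^ 2 / (1 + t - τ)) ^ (-1 : ℝ)
        * (1 + τ) ^ (-(7 / 2) : ℝ) * (1 + (‖y‖ - c * τ) ^ 2 / (1 + τ)) ^ (-2 : ℝ) ∂μ
      ≤ 12 * π * μ.real (ball 0 1) * (1 + c ^ 2) * (1 + t) ^ (-1 : ℝ) * (1 + τ)⁻¹ := by
  have hτ1 : 0 < 1 + τ := by linarith
  have ht : 0 ≤ t := by linarith
  set σ := 1 + t - τ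
  have hσ : 0 < σ := by linarith
  have hH := integrable_one_add_norm_sub_sq_div_rpow_neg_two μ hE hτ1 (c * τ)
  calc _ ≤ ∫ y, 2 * (1 + t) ^ (-1 : ℝ) * (1 + τ) ^ (-(7 / 2) : ℝ)
          * (1 + (‖y‖ - c * τ) ^ 2 / (1 + τ)) ^ (-2 : ℝ) ∂μ := by
        refine integral_mono_of_nonneg (Filter.Eventually.of_forall fun y ↦ by positivity)
          (hH.const_mul _) (Filter.Eventually.of_forall fun y ↦ ?_)
        beta_reduce
        gcongr ?_ * _ * _
        exact rpow_neg_one_mul_one_add_div_rpow_neg_one_le hτ hτt (by positivity)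
    _ = 2 * (1 + t) ^ (-1 : ℝ) * ((1 + τ) ^ (-(7 / 2) : ℝ)
          * ∫ y, (1 + (‖y‖ - c * τ) ^ 2 / (1 + τ)) ^ (-2 : ℝ) ∂μ) := by
        rw [integral_const_mul]; ring
    _ ≤ 2 * (1 + t) ^ (-1 : ℝ) * ((1 + τ) ^ (-(7 / 2) : ℝ)
          * (6 * π * μ.real (ball 0 1) * (((1 + τ) + (c * τ) ^ 2) * √(1 + τ)))) := by
        gcongr
        exact integral_one_add_norm_sub_sq_div_rpow_neg_two_le μ hE hτ1 (c * τ)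
    _ = 12 * π * μ.real (ball 0 1) * (1 + t) ^ (-1 : ℝ) * ((1 + τ) ^ (-(7 / 2) : ℝ)
          * (((1 + τ) + (c * τ) ^ 2) * √(1 + τ))) := by ring
    _ ≤ 12 * π * μ.real (ball 0 1) * (1 + t) ^ (-1 : ℝ) * ((1 + c ^ 2) * (1 + τ)⁻¹) := by
        gcongr 12 * π * μ.real (ball 0 1) * (1 + t) ^ (-1 : ℝ) * ?_
        exact one_add_rpow_neg_seven_halves_mul_le hτ c
    _ = _ := by ring

end ThreeDimensional

theorem stmt_19_general (c : ℝ) :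
    ∃ C : ℝ, 0 < C ∧ ∀ t : ℝ, 0 ≤ t → ∀ x : EuclideanSpace ℝ (Fin 3),
      (∫ τ in Set.Icc (0 : ℝ) (t / 2), ∫ y : EuclideanSpace ℝ (Fin 3),
          (1 + t - τ) ^ (-1 : ℝ) * (1 + ‖x - y‖ ^ 2 / (1 + t - τ)) ^ (-1 : ℝ)
            * (1 + τ) ^ (-(7 / 2) : ℝ)
            * (1 + (‖y‖ - c * τ) ^ 2 / (1 + τ)) ^ (-2 : ℝ))
        ≤ C * (1 + t) ^ (-1 : ℝ) * Real.log (2 + t) := by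
  set K := 12 * π * volume.real (ball (0 : EuclideanSpace ℝ (Fin 3)) 1) * (1 + c ^ 2)
  refine ⟨K + 1, by positivity, fun t ht x ↦ ?_⟩
  have hint : IntegrableOn (fun τ ↦ K * (1 + t) ^ (-1 : ℝ) * (1 + τ)⁻¹) (Icc 0 (t / 2)) :=
    (continuousOn_const.mul ((continuousOn_const.add continuousOn_id).inv₀
      fun τ hτ ↦ (by linarith [hτ.1] : (0 : ℝ) < 1 + τ).ne')).integrableOn_compact isCompact_Icc
  calc _ ≤ ∫ τ in Icc 0 (t / 2), K * (1 + t) ^ (-1 : ℝ) * (1 + τ)⁻¹ := by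
        refine setIntegral_mono_of_nonneg (fun τ hτ ↦ ?_) (fun τ hτ ↦ ?_) hint
        · have : 0 < 1 + t - τ := by linarith [hτ.2]
          have : 0 < 1 + τ := by linarith [hτ.1]
          exact integral_nonneg fun y ↦ by positivity
        · exact integral_riesz_mul_huygens_le volume finrank_euclideanSpace_fin c hτ.1 hτ.2 x
    _ = K * (1 + t) ^ (-1 : ℝ) * log (1 + t / 2) := by
        rw [integral_const_mul, integral_Icc_inv_one_add (by linarith)]
    _ ≤ (K + 1) * (1 + t) ^ (-1 : ℝ) * log (2 + t) := by
        gcongr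
        · exact log_nonneg (by linarith)
        all_goals linarith

/-- Estimate (1.35)/(5.8) for 𝒩₁₂: the naive convolution of the Riesz wave-IV
with a nonlinear Huygens wave of weight (1+τ)^{−7/2} incurs a logarithmic loss. -/
theorem stmt_19 (c : ℝ) (hc : 0 < c) :
    ∃ C : ℝ, 0 < C ∧ ∀ t : ℝ, 0 ≤ t → ∀ x : EuclideanSpace ℝ (Fin 3),
      (∫ τ in Set.Icc (0 : ℝ) (t / 2), ∫ y : EuclideanSpace ℝ (Fin 3),
          (1 + t - τ) ^ (-1 : ℝ) * (1 + ‖x - y‖ ^ 2 / (1 + t - τ)) ^ (-1 : ℝ)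
            * (1 + τ) ^ (-(7 / 2) : ℝ)
            * (1 + (‖y‖ - c * τ) ^ 2 / (1 + τ)) ^ (-2 : ℝ))
        ≤ C * (1 + t) ^ (-1 : ℝ) * Real.log (2 + t) :=
  stmt_19_general c
end
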